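/- arXiv:1902.06698 — 9 statements merged into one kernel-verified Lean document; each statement's English description precedes it below -/
import Mathlib

section
/- In the SMC instance with men m1,m2,m3 and women w1,w2,w3 where U(m1,w1)=0,V(m1,w1)=3; U(m1,w2)=1,V(m1,w2)=0; U(m1,w3)=2,V(m1,w3)=1; U(m2,w1)=2,V(m2,w1)=0; U(m2,w2)=1,V(m2,w2)=1; U(m2,w3)=0,V(m2,w3)=2; U(m3,w1)=1,V(m3,w1)=1; U(m3,w2)=0,V(m3,w2)=2; U(m3,w3)=3,V(m3,w3)=0, there exists a stable fractional matching with social welfare 15/2, which is strictly greater than the social welfare of every stable integral (perfect) matching on this instance. -/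
open Finset

/-- A fractional matching: nonnegative weights with row and column sums at most 1. -/
def IsFrac {n : ℕ} (μ : Fin n → Fin n → ℝ) : Prop :=
  (∀ m w, 0 ≤ μ m w) ∧ (∀ m, ∑ w, μ m w ≤ 1) ∧ (∀ w, ∑ m, μ m w ≤ 1)

/-- An integral matching takes values in {0,1}. -/
def IsIntegralM {n : ℕ} (μ : Fin n → Fin n → ℝ) : Prop :=
  ∀ m w, μ m w = 0 ∨ μ m w = 1

/-- A complete (perfect) matching: all row and column sums equal 1. -/
def IsPerfect {n : ℕ} (μ : Fin n → Fin n → ℝ) : Prop :=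
  (∀ m, ∑ w, μ m w = 1) ∧ (∀ w, ∑ m, μ m w = 1)

/-- Utility of man `m` under matching `μ`. -/
def uM {n : ℕ} (U μ : Fin n → Fin n → ℝ) (m : Fin n) : ℝ := ∑ w, U m w * μ m w

/-- Utility of woman `w` under matching `μ`. -/
def vW {n : ℕ} (V μ : Fin n → Fin n → ℝ) (w : Fin n) : ℝ := ∑ m, V m w * μ m w

/-- Stability: no blocking pair. -/
def IsStable {n : ℕ} (U V μ : Fin n → Fin n → ℝ) : Prop :=
  ∀ m w, U m w ≤ uM U μ m ∨ V m w ≤ vW V μ w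

/-- Social welfare. -/
def welfare {n : ℕ} (U V μ : Fin n → Fin n → ℝ) : ℝ :=
  (∑ m, uM U μ m) + (∑ w, vW V μ w)

def U0 : Fin 3 → Fin 3 → ℝ := ![![0,1,2],![2,1,0],![1,0,3]]
def V0 : Fin 3 → Fin 3 → ℝ := ![![3,0,1],![0,1,2],![1,2,0]]

/-!
Every entry of `U0 + V0` is `2` except for `3` at `(0,0)`, `(0,2)`, `(2,2)` and `1` at `(0,1)`, so
once every man is fully matched the welfare is `7 - 2 μ₀₁ + μ₂₂`. The fractional matching that
matches `m₀` to `w₀` and splits `m₁, m₂` evenly between `w₁, w₂` is stable with welfare `15/2`.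
An integral perfect matching exceeds `7` only if `μ₀₁ = 0` and `μ₂₂ = 1`, which forces the
identity matching, and that one is blocked by `(m₀, w₂)`.
-/

theorem welfare_eq_sum {n : ℕ} (U V μ : Fin n → Fin n → ℝ) :
    welfare U V μ = ∑ m, ∑ w, (U m w + V m w) * μ m w := by
  simp only [welfare, uM, vW, add_mul, sum_add_distrib]
  rw [sum_comm (f := fun w m => V m w * μ m w)]

theorem welfare_U0_V0 {μ : Fin 3 → Fin 3 → ℝ} (hrow : ∀ m, ∑ w, μ m w = 1) :
    welfare U0 V0 μ = 7 - 2 * μ 0 1 + μ 2 2 := by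
  have h0 := hrow 0
  have h1 := hrow 1
  have h2 := hrow 2
  simp only [Fin.sum_univ_three] at h0 h1 h2
  simp only [welfare_eq_sum, Fin.sum_univ_three, U0, V0, Matrix.cons_val', Matrix.cons_val_fin_one,
    Matrix.cons_val_zero, Matrix.cons_val_one, Matrix.cons_val]
  linarith

theorem IsIntegralM.nonneg {n : ℕ} {ν : Fin n → Fin n → ℝ} (h : IsIntegralM ν) (m w : Fin n) :
    0 ≤ ν m w := by
  rcases h m w with h | h <;> simp [h]

theorem IsIntegralM.le_one {n : ℕ} {ν : Fin n → Fin n → ℝ} (h : IsIntegralM ν) (m w : Fin n) :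
    ν m w ≤ 1 := by
  rcases h m w with h | h <;> simp [h]

noncomputable def halfMatching : Fin 3 → Fin 3 → ℝ :=
  ![![1, 0, 0], ![0, 1/2, 1/2], ![0, 1/2, 1/2]]

theorem halfMatching_row_sum (m : Fin 3) : ∑ w, halfMatching m w = 1 := by
  fin_cases m <;> simp [halfMatching, Fin.sum_univ_three] <;> norm_num

theorem isFrac_halfMatching : IsFrac halfMatching := by
  refine ⟨fun m w => ?_, fun m => (halfMatching_row_sum m).le, fun w => ?_⟩
  · fin_cases m <;> fin_cases w <;> simp [halfMatching]
  · fin_cases w <;> simp [halfMatching, Fin.sum_univ_three] <;> norm_num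

theorem uM_halfMatching : uM U0 halfMatching = ![0, 1/2, 3/2] := by
  ext m
  fin_cases m <;> simp [uM, U0, halfMatching, Fin.sum_univ_three]
  norm_num

theorem vW_halfMatching : vW V0 halfMatching = ![3, 3/2, 1] := by
  ext w
  fin_cases w <;> simp [vW, V0, halfMatching, Fin.sum_univ_three]
  norm_num

theorem isStable_halfMatching : IsStable U0 V0 halfMatching := by
  intro m w
  rw [uM_halfMatching, vW_halfMatching]
  fin_cases m <;> fin_cases w <;> simp [U0, V0] <;> norm_num

theorem welfare_halfMatching : welfare U0 V0 halfMatching = 15/2 := by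
  rw [welfare_U0_V0 halfMatching_row_sum]
  simp [halfMatching]
  norm_num

theorem not_isStable_U0_V0 {ν : Fin 3 → Fin 3 → ℝ} (hint : IsIntegralM ν)
    (hperf : IsPerfect ν) (h01 : ν 0 1 = 0) (h22 : ν 2 2 = 1) : ¬ IsStable U0 V0 ν := by
  have c2 := hperf.2 2
  simp only [Fin.sum_univ_three] at c2
  have h02 : ν 0 2 = 0 := by linarith [hint.nonneg 0 2, hint.nonneg 1 2]
  have h12 : ν 1 2 = 0 := by linarith [hint.nonneg 0 2, hint.nonneg 1 2]
  have hu : uM U0 ν 0 = 0 := by simp [uM, U0, Fin.sum_univ_three, h01, h02]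
  have hv : vW V0 ν 2 = 0 := by simp [vW, V0, Fin.sum_univ_three, h02, h12, h22]
  have hU : U0 0 2 = 2 := by simp [U0]
  have hV : V0 0 2 = 1 := by simp [V0]
  intro hstab
  rcases hstab 0 2 with h | h <;> linarith

theorem stmt0 :
    ∃ μ : Fin 3 → Fin 3 → ℝ, IsFrac μ ∧ IsStable U0 V0 μ ∧ welfare U0 V0 μ = 15/2 ∧
      ∀ ν : Fin 3 → Fin 3 → ℝ, IsIntegralM ν → IsPerfect ν → IsStable U0 V0 ν →
        welfare U0 V0 ν < 15/2 := by
  refine ⟨halfMatching, isFrac_halfMatching, isStable_halfMatching, welfare_halfMatching, ?_⟩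
  intro ν hint hperf hstab
  rw [welfare_U0_V0 hperf.1]
  rcases hint 0 1 with h01 | h01
  · rcases hint 2 2 with h22 | h22
    · linarith
    · exact absurd hstab (not_isStable_U0_V0 hint hperf h01 h22)
  · linarith [hint.le_one 2 2]
end

section
/- There exists an SMC instance with binary valuations (U,V taking values in {0,1}) for which the set of stable fractional matchings is not convex. Concretely, for the 3×3 instance with U(m1,w2)=0,V(m1,w2)=1; U(m1,w3)=1,V(m1,w3)=0; U(m2,w1)=1,V(m2,w1)=0; U(m2,w2)=1,V(m2,w2)=1; U(m2,w3)=0,V(m2,w3)=1; U(m3,w1)=0,V(m3,w1)=1; U(m3,w2)=1,V(m3,w2)=0, and all other pairs valued 0 by both agents, the integral matchings μ1={(m1,w3),(m2,w1),(m3,w2)} and μ2={(m1,w2),(m2,w3),(m3,w1)} are both stable, but the fractional matching (1/2)μ1+(1/2)μ2 is not stable. -/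
/-!
`mu12` and `mu11` are the permutation matrices of the 3-cycle `m ↦ m + 1` and of its inverse, so
each agent's utility is simply its valuation of its partner, and stability is a finite check. In the
average of the two matchings, `m2` gets `(U(m2,w1) + U(m2,w3))/2 = 1/2` and `w2` gets
`(V(m3,w2) + V(m1,w2))/2 = 1/2`, while both value each other at `1`, so `(m2, w2)` blocks.
-/

open Finset

def U1 : Fin 3 → Fin 3 → ℝ := ![![0,0,1],![1,1,0],![0,1,0]]
def V1 : Fin 3 → Fin 3 → ℝ := ![![0,1,0],![0,1,1],![1,0,0]]
def mu11 : Fin 3 → Fin 3 → ℝ := ![![0,0,1],![1,0,0],![0,1,0]]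
def mu12 : Fin 3 → Fin 3 → ℝ := ![![0,1,0],![0,0,1],![1,0,0]]

open Equiv

section PermutationMatching

variable {n : ℕ} (σ : Perm (Fin n))

theorem isIntegralM_permMatrix : IsIntegralM (σ.permMatrix ℝ) := by
  intro m w
  by_cases h : σ m = w <;> simp [h]

theorem isPerfect_permMatrix : IsPerfect (σ.permMatrix ℝ) :=
  (mem_doublyStochastic_iff_sum.mp permMatrix_mem_doublyStochastic).2

theorem uM_permMatrix (U : Fin n → Fin n → ℝ) (m : Fin n) :
    uM U (σ.permMatrix ℝ) m = U m (σ m) := by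
  simp [uM]

theorem vW_permMatrix (V : Fin n → Fin n → ℝ) (w : Fin n) :
    vW V (σ.permMatrix ℝ) w = V (σ⁻¹ w) w := by
  simp [vW, ← Equiv.eq_symm_apply, Perm.inv_def]

theorem isStable_permMatrix_iff (U V : Fin n → Fin n → ℝ) :
    IsStable U V (σ.permMatrix ℝ) ↔ ∀ m w, U m w ≤ U m (σ m) ∨ V m w ≤ V (σ⁻¹ w) w := by
  simp only [IsStable, uM_permMatrix, vW_permMatrix]

end PermutationMatching

section ConvexCombination

variable {n : ℕ} (a b : ℝ) (μ ν : Fin n → Fin n → ℝ)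

theorem uM_convexCombination (U : Fin n → Fin n → ℝ) (m : Fin n) :
    uM U (fun m w => a * μ m w + b * ν m w) m = a * uM U μ m + b * uM U ν m := by
  simp only [uM, mul_sum, ← sum_add_distrib]
  exact sum_congr rfl fun w _ => by ring

theorem vW_convexCombination (V : Fin n → Fin n → ℝ) (w : Fin n) :
    vW V (fun m w => a * μ m w + b * ν m w) w = a * vW V μ w + b * vW V ν w := by
  simp only [vW, mul_sum, ← sum_add_distrib]
  exact sum_congr rfl fun m _ => by ring

end ConvexCombination

theorem not_isStable_of_blocking {n : ℕ} {U V μ : Fin n → Fin n → ℝ} {m w : Fin n}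
    (hm : uM U μ m < U m w) (hw : vW V μ w < V m w) : ¬ IsStable U V μ := fun h =>
  (h m w).elim (not_le_of_gt hm) (not_le_of_gt hw)

theorem mu11_eq_permMatrix : mu11 = (finRotate 3)⁻¹.permMatrix ℝ := by
  ext m w
  fin_cases m <;> fin_cases w <;> simp [mu11, Perm.inv_def, finRotate_symm_apply] <;> decide

theorem mu12_eq_permMatrix : mu12 = (finRotate 3).permMatrix ℝ := by
  ext m w
  fin_cases m <;> fin_cases w <;> simp [mu12]

theorem isStable_U1_V1_mu11 : IsStable U1 V1 mu11 := by
  rw [mu11_eq_permMatrix, isStable_permMatrix_iff]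
  simp [Fin.forall_fin_succ, U1, V1, Perm.inv_def, finRotate_symm_apply]

theorem isStable_U1_V1_mu12 : IsStable U1 V1 mu12 := by
  rw [mu12_eq_permMatrix, isStable_permMatrix_iff]
  simp [Fin.forall_fin_succ, U1, V1, Perm.inv_def, finRotate_symm_apply]

theorem stmt1 :
    (IsIntegralM mu11 ∧ IsPerfect mu11 ∧ IsStable U1 V1 mu11) ∧
    (IsIntegralM mu12 ∧ IsPerfect mu12 ∧ IsStable U1 V1 mu12) ∧
    ¬ IsStable U1 V1 (fun m w => (1/2) * mu11 m w + (1/2) * mu12 m w) := by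
  refine ⟨⟨?_, ?_, isStable_U1_V1_mu11⟩, ⟨?_, ?_, isStable_U1_V1_mu12⟩, ?_⟩
  · exact mu11_eq_permMatrix ▸ isIntegralM_permMatrix _
  · exact mu11_eq_permMatrix ▸ isPerfect_permMatrix _
  · exact mu12_eq_permMatrix ▸ isIntegralM_permMatrix _
  · exact mu12_eq_permMatrix ▸ isPerfect_permMatrix _
  · refine not_isStable_of_blocking (m := 1) (w := 1) ?_ ?_
    · rw [uM_convexCombination, mu11_eq_permMatrix, mu12_eq_permMatrix, uM_permMatrix, uM_permMatrix]
      simp [U1]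
      norm_num
    · rw [vW_convexCombination, mu11_eq_permMatrix, mu12_eq_permMatrix, vW_permMatrix, vW_permMatrix]
      simp [V1, Perm.inv_def, finRotate_symm_apply]
      norm_num
end

section
/- Given any SMC instance I on n men and n women, there exists an optimal stable fractional matching for I that assigns positive weight to at most 4n man-woman pairs, and hence admits a support consisting of at most 4n integral matchings. -/
open Finset

/-!
Stable fractional matchings form a compact set, nonempty because deferred acceptance (here in
Fleiner's fixed-point form) yields a stable integral matching, so welfare attains its maximum at
some `μ₀`. Every nonnegative `μ` with the same row sums, column sums and utilities as `μ₀` is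
again stable with the same welfare. Among these, one of minimal support is a basic solution: the
constraint map is injective on vectors supported in its support. Row and column sums have the
same total, so that map has rank `< 4n`, whence the support has fewer than `4n` pairs. Birkhoff's
theorem, applied to the `2n × 2n` doubly stochastic completion of `μ`, writes `μ` as a convex
combination of integral matchings, all supported in the support of `μ`, and Carathéodory's theorem
in that `|support|`-dimensional space keeps at most `|support| + 1 ≤ 4n` of them.
-/

open Module Matrix

namespace SMC

section Rejection

variable {E ι K : Type*} [LinearOrder K] (side : E → ι) (key : E → K)

def rejected (A : Set E) : Set E :=
  {e ∈ A | ∃ e' ∈ A, side e' = side e ∧ key e < key e'}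

lemma rejected_subset (A : Set E) : rejected side key A ⊆ A := fun _ he => he.1

lemma rejected_mono : Monotone (rejected side key) :=
  fun _ _ hAB _ ⟨he, e', he', hside, hlt⟩ => ⟨hAB he, e', hAB he', hside, hlt⟩

variable {side key}

lemma eq_of_mem_diff_rejected (hkey : ∀ e e', side e = side e' → key e = key e' → e = e')
    {A : Set E} {e e' : E} (he : e ∈ A \ rejected side key A)
    (he' : e' ∈ A \ rejected side key A)
    (hside : side e = side e') : e = e' :=
  hkey e e' hside <| le_antisymm
    (not_lt.1 fun h => he'.2 ⟨he'.1, e, he.1, hside, h⟩)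
    (not_lt.1 fun h => he.2 ⟨he.1, e', he'.1, hside.symm, h⟩)

lemma exists_mem_diff_rejected_le [Finite E] {A : Set E} {e : E} (he : e ∈ A) :
    ∃ e' ∈ A \ rejected side key A, side e' = side e ∧ key e ≤ key e' := by
  obtain ⟨e', ⟨he'A, he'side⟩, hmax⟩ :=
    Set.exists_max_image {e' | e' ∈ A ∧ side e' = side e} key (Set.toFinite _) ⟨e, he, rfl⟩
  refine ⟨e', ⟨he'A, ?_⟩, he'side, hmax e ⟨he, rfl⟩⟩
  rintro ⟨-, e'', he''A, hside, hlt⟩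
  exact (hmax e'' ⟨he''A, hside.trans he'side⟩).not_gt hlt

end Rejection

section Indicator

variable {n : ℕ} {C : Set (Fin n × Fin n)}

lemma isFrac_indicator (hrow : ∀ m w w', (m, w) ∈ C → (m, w') ∈ C → w = w')
    (hcol : ∀ m m' w, (m, w) ∈ C → (m', w) ∈ C → m = m') :
    IsFrac fun m w => C.indicator 1 (m, w) := by
  classical
  refine ⟨fun m w => Set.indicator_nonneg (fun _ _ => zero_le_one) _, fun m => ?_, fun w => ?_⟩
  · simp only [Set.indicator_apply, Pi.one_apply, sum_boole, Nat.cast_le_one]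
    exact card_le_one.2 fun w hw w' hw' => hrow m w w' (by simpa using hw) (by simpa using hw')
  · simp only [Set.indicator_apply, Pi.one_apply, sum_boole, Nat.cast_le_one]
    exact card_le_one.2 fun m hm m' hm' => hcol m m' w (by simpa using hm) (by simpa using hm')

lemma uM_indicator (U : Fin n → Fin n → ℝ)
    (hrow : ∀ m w w', (m, w) ∈ C → (m, w') ∈ C → w = w')
    {m w : Fin n} (h : (m, w) ∈ C) : uM U (fun m w => C.indicator 1 (m, w)) m = U m w := by
  rw [uM, sum_eq_single w (fun w' _ hw' => ?_) (by simp), Set.indicator_of_mem h, Pi.one_apply,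
    mul_one]
  rw [Set.indicator_of_notMem (fun h' => hw' (hrow m w w' h h').symm), mul_zero]

lemma vW_indicator (V : Fin n → Fin n → ℝ)
    (hcol : ∀ m m' w, (m, w) ∈ C → (m', w) ∈ C → m = m')
    {m w : Fin n} (h : (m, w) ∈ C) : vW V (fun m w => C.indicator 1 (m, w)) w = V m w := by
  rw [vW, sum_eq_single m (fun m' _ hm' => ?_) (by simp), Set.indicator_of_mem h, Pi.one_apply,
    mul_one]
  rw [Set.indicator_of_notMem (fun h' => hm' (hcol m m' w h h').symm), mul_zero]

end Indicator

section Existence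

variable {n : ℕ} (U V : Fin n → Fin n → ℝ)

-- Ties are broken by the partner's index, so that every agent's preference is strict.
def manKey (e : Fin n × Fin n) : ℝ ×ₗ Fin n := toLex (U e.1 e.2, e.2)

def womanKey (e : Fin n × Fin n) : ℝ ×ₗ Fin n := toLex (V e.1 e.2, e.1)

lemma eq_of_fst_eq_of_manKey_eq (e e' : Fin n × Fin n) (hside : e.1 = e'.1)
    (hkey : manKey U e = manKey U e') : e = e' :=
  Prod.ext hside (congrArg (fun k => (ofLex k).2) hkey)

lemma eq_of_snd_eq_of_womanKey_eq (e e' : Fin n × Fin n) (hside : e.2 = e'.2)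
    (hkey : womanKey V e = womanKey V e') : e = e' :=
  Prod.ext (congrArg (fun k => (ofLex k).2) hkey) hside

def fleinerMap : Set (Fin n × Fin n) →o Set (Fin n × Fin n) where
  toFun X := (rejected Prod.snd (womanKey V) (rejected Prod.fst (manKey U) X)ᶜ)ᶜ
  monotone' _ _ h := Set.compl_subset_compl.2 <|
    rejected_mono _ _ <| Set.compl_subset_compl.2 <| rejected_mono _ _ h

/- For a fixed point `X` of `fleinerMap` and `X' := (rejected by men in X)ᶜ`, the edges of `X`
kept by the men are the edges of `X'` kept by the women; they form a stable matching because every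
edge lies in `X` or in `X'`. -/
theorem exists_isFrac_isStable : ∃ μ, IsFrac μ ∧ IsStable U V μ := by
  set X := OrderHom.lfp (fleinerMap U V)
  set X' := (rejected Prod.fst (manKey U) X)ᶜ
  have hX : (rejected Prod.snd (womanKey V) X')ᶜ = X := OrderHom.map_lfp (fleinerMap U V)
  set C := X \ rejected Prod.fst (manKey U) X
  have hC : C = X' \ rejected Prod.snd (womanKey V) X' := by
    rw [Set.sdiff_eq, hX]; exact Set.inter_comm X X'
  have hrow : ∀ m w w', (m, w) ∈ C → (m, w') ∈ C → w = w' := fun m w w' h h' =>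
    congrArg Prod.snd (eq_of_mem_diff_rejected (eq_of_fst_eq_of_manKey_eq U) h h' rfl)
  have hcol : ∀ m m' w, (m, w) ∈ C → (m', w) ∈ C → m = m' := by
    intro m m' w h h'
    rw [hC] at h h'
    exact congrArg Prod.fst (eq_of_mem_diff_rejected (eq_of_snd_eq_of_womanKey_eq V) h h' rfl)
  refine ⟨_, isFrac_indicator hrow hcol, fun m w => ?_⟩
  by_cases hmw : (m, w) ∈ X
  · obtain ⟨⟨m', w'⟩, hC', rfl, hle⟩ :=
      exists_mem_diff_rejected_le (side := Prod.fst) (key := manKey U) hmw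
    exact .inl ((uM_indicator U hrow hC').symm ▸ Prod.Lex.monotone_fst _ _ hle)
  · have hmw' : (m, w) ∈ X' := fun h => hmw (rejected_subset _ _ _ h)
    obtain ⟨⟨m', w'⟩, hC', rfl, hle⟩ :=
      exists_mem_diff_rejected_le (side := Prod.snd) (key := womanKey V) hmw'
    rw [← hC] at hC'
    exact .inr ((vW_indicator V hcol hC').symm ▸ Prod.Lex.monotone_fst _ _ hle)

end Existence

section Optimum

variable {n : ℕ} (U V : Fin n → Fin n → ℝ)

lemma continuous_welfare : Continuous (welfare U V) := by
  unfold welfare uM vW; fun_prop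

lemma isClosed_setOf_isFrac_isStable : IsClosed {μ | IsFrac μ ∧ IsStable U V μ} := by
  simp only [IsFrac, IsStable, uM, vW, Set.ofPred_and, Set.ofPred_forall, Set.ofPred_or]
  repeat' first
    | apply IsClosed.inter | apply IsClosed.union | (apply isClosed_iInter; intro)
    | (apply isClosed_le <;> fun_prop)

lemma isCompact_setOf_isFrac_isStable : IsCompact {μ | IsFrac μ ∧ IsStable U V μ} := by
  refine (isCompact_univ_pi fun _ => isCompact_univ_pi fun _ => isCompact_Icc (a := (0 : ℝ))
    (b := 1)).of_isClosed_subset (isClosed_setOf_isFrac_isStable U V) ?_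
  rintro μ ⟨⟨hnonneg, hrow, -⟩, -⟩ m - w -
  exact ⟨hnonneg m w, (single_le_sum (fun w _ => hnonneg m w) (mem_univ w)).trans (hrow m)⟩

end Optimum

section BasicSolution

variable {ι F : Type*}

def supportedIn (x : ι → ℝ) : Submodule ℝ (ι → ℝ) :=
  LinearMap.ker (LinearMap.funLeft ℝ ℝ ((↑) : {i // x i = 0} → ι))

lemma mem_supportedIn {x z : ι → ℝ} : z ∈ supportedIn x ↔ ∀ i, x i = 0 → z i = 0 := by
  simp [supportedIn, funext_iff, LinearMap.funLeft]

variable [Fintype ι] [AddCommGroup F] [Module ℝ F]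

lemma finrank_supportedIn (x : ι → ℝ) : finrank ℝ (supportedIn x) = #{i | x i ≠ 0} := by
  have hrank := LinearMap.finrank_range_add_finrank_ker
    (LinearMap.funLeft ℝ ℝ ((↑) : {i // x i = 0} → ι))
  rw [LinearMap.range_eq_top.2
      (LinearMap.funLeft_surjective_of_injective _ _ _ Subtype.val_injective),
    finrank_top, finrank_fintype_fun_eq_card, finrank_fintype_fun_eq_card,
    Fintype.card_subtype] at hrank
  have hsplit := card_filter_add_card_filter_not (s := univ) (fun i => x i = 0)
  rw [supportedIn]
  simp only [card_univ, ← ne_eq] at hsplit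
  omega

lemma exists_nonneg_sub_smul_support_ssubset {x z : ι → ℝ} (hx : 0 ≤ x) (hz : z ≠ 0)
    (hzx : z ∈ supportedIn x) :
    ∃ t : ℝ, 0 ≤ x - t • z ∧
      ({i | (x - t • z) i ≠ 0} : Finset ι) ⊂ ({i | x i ≠ 0} : Finset ι) := by
  wlog hpos : ∃ i, 0 < z i generalizing z
  · obtain ⟨t, ht⟩ := this (neg_ne_zero.2 hz) (neg_mem hzx) (by
      obtain ⟨i, hi⟩ := Function.ne_iff.1 hz
      exact ⟨i, neg_pos.2 ((not_lt.1 fun h => hpos ⟨i, h⟩).lt_of_ne hi)⟩)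
    exact ⟨-t, by simpa only [neg_smul, smul_neg] using ht⟩
  rw [mem_supportedIn] at hzx
  obtain ⟨i₀, hi₀, hmin⟩ := exists_min_image {i | 0 < z i} (fun i => x i / z i)
    (by simpa [Finset.Nonempty] using hpos)
  simp only [mem_filter_univ] at hi₀
  refine ⟨x i₀ / z i₀, fun i => ?_, ?_⟩
  · have ht : 0 ≤ x i₀ / z i₀ := div_nonneg (hx i₀) hi₀.le
    suffices x i₀ / z i₀ * z i ≤ x i by simpa using this
    rcases lt_or_ge 0 (z i) with hzi | hzi
    · exact (le_div_iff₀ hzi).1 (hmin i (by simpa using hzi))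
    · exact (mul_nonpos_of_nonneg_of_nonpos ht hzi).trans (hx i)
  · refine ssubset_iff_of_subset (fun i => ?_) |>.2 ⟨i₀, ?_, ?_⟩
    · simp only [mem_filter_univ, Pi.sub_apply, Pi.smul_apply, smul_eq_mul]
      intro h hxi
      exact h (by rw [hxi, hzx i hxi]; ring)
    · simpa using fun h => hi₀.ne' (hzx i₀ h)
    · simp [div_mul_cancel₀ _ hi₀.ne']

theorem exists_nonneg_card_support_le_finrank_range (L : (ι → ℝ) →ₗ[ℝ] F) {x : ι → ℝ}
    (hx : 0 ≤ x) :
    ∃ y, 0 ≤ y ∧ L y = L x ∧ #{i | y i ≠ 0} ≤ finrank ℝ (LinearMap.range L) := by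
  obtain ⟨y, ⟨hy, hLy⟩, hmin⟩ := (measure fun y : ι → ℝ => #{i | y i ≠ 0}).wf.has_min
    {y | 0 ≤ y ∧ L y = L x} ⟨x, hx, rfl⟩
  refine ⟨y, hy, hLy, ?_⟩
  have hinj : LinearMap.ker (L.domRestrict (supportedIn y)) = ⊥ := by
    refine (Submodule.eq_bot_iff _).2 fun ⟨z, hz⟩ hLz => ?_
    by_contra hne
    obtain ⟨t, ht, hlt⟩ := exists_nonneg_sub_smul_support_ssubset hy
      (fun h => hne (Subtype.ext h)) hz
    refine hmin _ ⟨ht, ?_⟩ (card_lt_card hlt)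
    rw [map_sub, map_smul, show L z = 0 from hLz, smul_zero, sub_zero, hLy]
  rw [← finrank_supportedIn, ← LinearMap.finrank_range_of_inj (LinearMap.ker_eq_bot.1 hinj)]
  exact Submodule.finrank_mono (LinearMap.range_domRestrict_le_range _ _)

theorem exists_convexCombination_card_le_card_support_add_one {D : Set (ι → ℝ)}
    (hD : ∀ z ∈ D, 0 ≤ z) {x : ι → ℝ} (hx : x ∈ convexHull ℝ D) :
    ∃ k ≤ #{i | x i ≠ 0} + 1, ∃ (w : Fin k → ℝ) (z : Fin k → ι → ℝ),
      (∀ j, 0 ≤ w j) ∧ ∑ j, w j = 1 ∧ (∀ j, z j ∈ D) ∧ ∑ j, w j • z j = x := by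
  obtain ⟨κ, _, z, w, hzD, hind, hw, hw1, hwz⟩ := eq_pos_convex_span_of_mem_convexHull hx
  have hzx : ∀ k, z k ∈ supportedIn x := fun k => mem_supportedIn.2 fun i hxi => by
    have hterms := (sum_eq_zero_iff_of_nonneg fun j _ => mul_nonneg (hw j).le
      (hD _ (hzD ⟨j, rfl⟩) i)).1 (by simpa [← hwz] using hxi) k (mem_univ k)
    exact (mul_eq_zero.1 hterms).resolve_left (hw k).ne'
  have hspan : vectorSpan ℝ (Set.range z) ≤ supportedIn x := by
    refine Submodule.span_le.2 ?_
    rintro _ ⟨_, ⟨a, rfl⟩, _, ⟨b, rfl⟩, rfl⟩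
    exact sub_mem (hzx a) (hzx b)
  have hcard : Fintype.card κ ≤ #{i | x i ≠ 0} + 1 := by
    grw [hind.card_le_finrank_succ, Submodule.finrank_mono hspan, finrank_supportedIn]
  let e := (Fintype.equivFin κ).symm
  refine ⟨_, hcard, w ∘ e, z ∘ e, fun j => (hw _).le, ?_, fun j => hzD ⟨_, rfl⟩, ?_⟩
  · rw [← hw1]; exact e.sum_comp w
  · rw [← hwz]; exact e.sum_comp fun k => w k • z k

end BasicSolution

section Profile

variable {n : ℕ} (U V : Fin n → Fin n → ℝ)

def profile :
    (Fin n × Fin n → ℝ) →ₗ[ℝ]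
      (Fin n → ℝ) × (Fin n → ℝ) × (Fin n → ℝ) × (Fin n → ℝ) where
  toFun y := (fun m => ∑ w, y (m, w), fun w => ∑ m, y (m, w),
    uM U (Function.curry y), vW V (Function.curry y))
  map_add' a b := by ext <;> simp [uM, vW, sum_add_distrib, mul_add]
  map_smul' c a := by ext <;> simp [uM, vW, mul_sum, mul_left_comm]

lemma profile_apply (y : Fin n × Fin n → ℝ) :
    profile U V y = (fun m => ∑ w, y (m, w), fun w => ∑ m, y (m, w),
      uM U (Function.curry y), vW V (Function.curry y)) :=
  rfl

lemma finrank_range_profile_lt (hn : 0 < n) :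
    finrank ℝ (LinearMap.range (profile U V)) < 4 * n := by
  have hF :
      finrank ℝ ((Fin n → ℝ) × (Fin n → ℝ) × (Fin n → ℝ) × (Fin n → ℝ)) = 4 * n := by
    simp only [finrank_prod, finrank_fin_fun]; ring
  rw [← hF]
  refine Submodule.finrank_lt fun htop => ?_
  obtain ⟨y, hy⟩ := (LinearMap.range_eq_top.1 htop) (Pi.single ⟨0, hn⟩ 1, 0, 0, 0)
  have hrow : ∑ m, ∑ w, y (m, w) = 1 := by
    simpa [profile_apply] using congrArg (fun p => ∑ m, p.1 m) hy
  have hcol : ∑ w, ∑ m, y (m, w) = 0 := by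
    simpa [profile_apply] using congrArg (fun p => ∑ w, p.2.1 w) hy
  rw [sum_comm] at hcol
  linarith

lemma isFrac_isStable_of_profile_eq {x y : Fin n × Fin n → ℝ} (hy : 0 ≤ y)
    (h : profile U V y = profile U V x) (hx : IsFrac (Function.curry x))
    (hxs : IsStable U V (Function.curry x)) :
    IsFrac (Function.curry y) ∧ IsStable U V (Function.curry y) ∧
      welfare U V (Function.curry y) = welfare U V (Function.curry x) := by
  simp only [profile_apply, Prod.mk.injEq, funext_iff] at h
  obtain ⟨hrow, hcol, hu, hv⟩ := h
  refine ⟨⟨fun m w => hy (m, w), fun m => (hrow m).trans_le (hx.2.1 m),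
    fun w => (hcol w).trans_le (hx.2.2 w)⟩, fun m w => hu m ▸ hv w ▸ hxs m w, ?_⟩
  simp only [welfare, hu, hv]

end Profile

section Birkhoff

variable {n : ℕ}

def completion (μ : Fin n → Fin n → ℝ) : Matrix (Fin n ⊕ Fin n) (Fin n ⊕ Fin n) ℝ :=
  fromBlocks (of μ) (diagonal fun m => 1 - ∑ w, μ m w)
    (diagonal fun w => 1 - ∑ m, μ m w) (of μ)ᵀ

lemma completion_mem_doublyStochastic {μ : Fin n → Fin n → ℝ} (hμ : IsFrac μ) :
    completion μ ∈ doublyStochastic ℝ (Fin n ⊕ Fin n) := by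
  obtain ⟨hnonneg, hrow, hcol⟩ := hμ
  refine mem_doublyStochastic_iff_sum.2 ⟨?_, ?_, ?_⟩
  · rintro (m | w) (m' | w') <;>
      simp [completion, diagonal_apply, hnonneg] <;> split_ifs <;> simp [hrow, hcol]
  · rintro (m | w) <;> simp [completion, Fintype.sum_sum_type, diagonal_apply]
  · rintro (m | w) <;> simp [completion, Fintype.sum_sum_type, diagonal_apply]

lemma isFrac_topLeft_of_mem_doublyStochastic {M : Matrix (Fin n ⊕ Fin n) (Fin n ⊕ Fin n) ℝ}
    (hM : M ∈ doublyStochastic ℝ (Fin n ⊕ Fin n)) :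
    IsFrac fun m w => M (.inl m) (.inl w) := by
  refine ⟨fun m w => nonneg_of_mem_doublyStochastic hM, fun m => ?_, fun w => ?_⟩
  · rw [← sum_row_of_mem_doublyStochastic hM (.inl m), Fintype.sum_sum_type]
    exact le_add_of_nonneg_right (sum_nonneg fun _ _ => nonneg_of_mem_doublyStochastic hM)
  · rw [← sum_col_of_mem_doublyStochastic hM (.inl w), Fintype.sum_sum_type]
    exact le_add_of_nonneg_right (sum_nonneg fun _ _ => nonneg_of_mem_doublyStochastic hM)

lemma isIntegralM_topLeft_permMatrix (σ : Equiv.Perm (Fin n ⊕ Fin n)) :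
    IsIntegralM fun m w => σ.permMatrix ℝ (.inl m) (.inl w) := by
  intro m w
  simp only [Equiv.Perm.permMatrix, PEquiv.toMatrix_apply]
  split_ifs <;> simp

lemma uncurry_mem_convexHull_integralMatchings {μ : Fin n → Fin n → ℝ} (hμ : IsFrac μ) :
    Function.uncurry μ ∈
      convexHull ℝ {z | IsIntegralM (Function.curry z) ∧ IsFrac (Function.curry z)} := by
  let topLeft : Matrix (Fin n ⊕ Fin n) (Fin n ⊕ Fin n) ℝ →ₗ[ℝ] Fin n × Fin n → ℝ :=
    { toFun M p := M (.inl p.1) (.inl p.2), map_add' _ _ := rfl, map_smul' _ _ := rfl }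
  have h := Set.mem_image_of_mem topLeft (completion_mem_doublyStochastic hμ)
  rw [doublyStochastic_eq_convexHull_permMatrix, LinearMap.image_convexHull] at h
  refine convexHull_mono ?_ h
  rintro _ ⟨_, ⟨σ, rfl⟩, rfl⟩
  exact ⟨isIntegralM_topLeft_permMatrix σ,
    isFrac_topLeft_of_mem_doublyStochastic permMatrix_mem_doublyStochastic⟩

end Birkhoff

end SMC

open SMC

theorem stmt5_general {n : ℕ} (hn : 0 < n) (U V : Fin n → Fin n → ℝ) :
    ∃ μ : Fin n → Fin n → ℝ, IsFrac μ ∧ IsStable U V μ ∧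
      (∀ μ', IsFrac μ' → IsStable U V μ' → welfare U V μ' ≤ welfare U V μ) ∧
      (Finset.univ.filter (fun p : Fin n × Fin n => μ p.1 p.2 ≠ 0)).card ≤ 4 * n ∧
      ∃ (k : ℕ), k ≤ 4 * n ∧
        ∃ (lam : Fin k → ℝ) (ν : Fin k → Fin n → Fin n → ℝ),
          (∀ j, 0 ≤ lam j) ∧ (∑ j, lam j = 1) ∧
          (∀ j, IsIntegralM (ν j) ∧ IsFrac (ν j)) ∧
          ∀ m w, μ m w = ∑ j, lam j * ν j m w := by
  obtain ⟨μ₀, ⟨hfrac₀, hstable₀⟩, hmax⟩ :=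
    (isCompact_setOf_isFrac_isStable U V).exists_isMaxOn (exists_isFrac_isStable U V)
      (continuous_welfare U V).continuousOn
  obtain ⟨y, hy, hprofile, hcard⟩ := exists_nonneg_card_support_le_finrank_range (profile U V)
    (x := Function.uncurry μ₀) fun p => hfrac₀.1 p.1 p.2
  obtain ⟨hfrac, hstable, hwelfare⟩ :=
    isFrac_isStable_of_profile_eq U V hy hprofile hfrac₀ hstable₀
  have hsupport : #{p | y p ≠ 0} < 4 * n := hcard.trans_lt (finrank_range_profile_lt U V hn)
  obtain ⟨k, hk, lam, z, hlam, hlam1, hz, hyz⟩ :=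
    exists_convexCombination_card_le_card_support_add_one (fun z hz p => hz.2.1 p.1 p.2)
      (uncurry_mem_convexHull_integralMatchings hfrac)
  rw [Function.uncurry_curry] at hk hyz
  refine ⟨Function.curry y, hfrac, hstable, fun μ hμ hμs => hwelfare ▸ hmax ⟨hμ, hμs⟩,
    hsupport.le, k, by omega, lam, fun j => Function.curry (z j), hlam, hlam1, hz, fun m w => ?_⟩
  simpa using (congrFun hyz (m, w)).symm

theorem stmt5 {n : ℕ} (hn : 0 < n) (U V : Fin n → Fin n → ℝ)
    (hU : ∀ m w, 0 ≤ U m w) (hV : ∀ m w, 0 ≤ V m w) :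
    ∃ μ : Fin n → Fin n → ℝ, IsFrac μ ∧ IsStable U V μ ∧
      (∀ μ', IsFrac μ' → IsStable U V μ' → welfare U V μ' ≤ welfare U V μ) ∧
      (Finset.univ.filter (fun p : Fin n × Fin n => μ p.1 p.2 ≠ 0)).card ≤ 4 * n ∧
      ∃ (k : ℕ), k ≤ 4 * n ∧
        ∃ (lam : Fin k → ℝ) (ν : Fin k → Fin n → Fin n → ℝ),
          (∀ j, 0 ≤ lam j) ∧ (∑ j, lam j = 1) ∧
          (∀ j, IsIntegralM (ν j) ∧ IsFrac (ν j)) ∧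
          ∀ m w, μ m w = ∑ j, lam j * ν j m w :=
  stmt5_general hn U V
end

section
/- Given an SMC instance I with binary valuations (U, V taking values in {0,1}), assign to each pair (m,w) the weight γ(m,w) = 2 + 1/n² if U(m,w)=V(m,w)=1, γ(m,w) = 1 if exactly one of U(m,w), V(m,w) equals 1, and γ(m,w) = 0 otherwise. Then any maximum-weight integral matching μ with respect to γ is a stable integral matching for I whose social welfare equals the maximum social welfare over all fractional matchings; in particular, an optimal stable fractional matching for I can be taken to be integral. -/
open Finset

theorem stmt6 {n : ℕ} (hn : 0 < n) (U V : Fin n → Fin n → ℝ)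
    (hU : ∀ m w, U m w = 0 ∨ U m w = 1) (hV : ∀ m w, V m w = 0 ∨ V m w = 1)
    (γ : Fin n → Fin n → ℝ)
    (hγ : ∀ m w, γ m w = if U m w = 1 ∧ V m w = 1 then 2 + 1/(n:ℝ)^2
        else if U m w = 1 ∨ V m w = 1 then 1 else 0)
    (μ : Fin n → Fin n → ℝ) (hint : IsIntegralM μ) (hfr : IsFrac μ)
    (hmax : ∀ ν, IsIntegralM ν → IsFrac ν →
        (∑ m, ∑ w, γ m w * ν m w) ≤ ∑ m, ∑ w, γ m w * μ m w) :
    IsStable U V μ ∧ ∀ μ', IsFrac μ' → welfare U V μ' ≤ welfare U V μ := by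
  classical
  have hnR : (0:ℝ) < n := by exact_mod_cast hn
  set c : ℝ := 1/(n:ℝ)^2 with hc
  have hcpos : 0 < c := by positivity
  have hUnn : ∀ m w, 0 ≤ U m w := by
    intro m w; rcases hU m w with h | h <;> rw [h] <;> norm_num
  have hVnn : ∀ m w, 0 ≤ V m w := by
    intro m w; rcases hV m w with h | h <;> rw [h] <;> norm_num
  have hUle : ∀ m w, U m w ≤ 1 := by
    intro m w; rcases hU m w with h | h <;> rw [h] <;> norm_num
  have hVle : ∀ m w, V m w ≤ 1 := by
    intro m w; rcases hV m w with h | h <;> rw [h] <;> norm_num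
  -- pointwise description of γ
  have hg : ∀ m w, γ m w
      = U m w + V m w + (if U m w = 1 ∧ V m w = 1 then c else 0) := by
    intro m w
    rw [hγ m w]
    rcases hU m w with h1 | h1 <;> rcases hV m w with h2 | h2 <;>
      simp [h1, h2, hc] <;> ring
  -- welfare as a double sum
  have hWelf : ∀ ξ : Fin n → Fin n → ℝ,
      welfare U V ξ = ∑ m, ∑ w, (U m w + V m w) * ξ m w := by
    intro ξ
    simp only [welfare, uM, vW]
    rw [Finset.sum_comm (f := fun w m => V m w * ξ m w), ← Finset.sum_add_distrib]
    refine Finset.sum_congr rfl fun m _ => ?_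
    rw [← Finset.sum_add_distrib]
    exact Finset.sum_congr rfl fun w _ => by ring
  -- the K functional
  set K : (Fin n → Fin n → ℝ) → ℝ :=
    fun ξ => ∑ m, ∑ w, (if U m w = 1 ∧ V m w = 1 then (1:ℝ) else 0) * ξ m w with hK
  -- γ-objective identity
  have hGid : ∀ ξ : Fin n → Fin n → ℝ,
      (∑ m, ∑ w, γ m w * ξ m w) = (∑ m, ∑ w, (U m w + V m w) * ξ m w) + c * K ξ := by
    intro ξ
    rw [hK, Finset.mul_sum, ← Finset.sum_add_distrib]
    refine Finset.sum_congr rfl fun m _ => ?_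
    rw [Finset.mul_sum, ← Finset.sum_add_distrib]
    refine Finset.sum_congr rfl fun w _ => ?_
    rw [hg m w]
    split <;> ring
  -- nonnegativity of K for fractional matchings
  have hK0 : ∀ ξ : Fin n → Fin n → ℝ, IsFrac ξ → 0 ≤ K ξ := by
    intro ξ hξ
    refine Finset.sum_nonneg fun m _ => Finset.sum_nonneg fun w _ => ?_
    refine mul_nonneg ?_ (hξ.1 m w)
    split <;> norm_num
  -- 2 K ξ ≤ welfare ξ
  have h2K : ∀ ξ : Fin n → Fin n → ℝ, IsFrac ξ → 2 * K ξ ≤ welfare U V ξ := by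
    intro ξ hξ
    rw [hWelf, hK, Finset.mul_sum]
    refine Finset.sum_le_sum fun m _ => ?_
    rw [Finset.mul_sum]
    refine Finset.sum_le_sum fun w _ => ?_
    split
    · next h => rw [h.1, h.2]; linarith
    · next h =>
        have := mul_nonneg (add_nonneg (hUnn m w) (hVnn m w)) (hξ.1 m w)
        simpa using this
  -- welfare ≤ 2 n for fractional matchings
  have hW2n : ∀ ξ : Fin n → Fin n → ℝ, IsFrac ξ → welfare U V ξ ≤ 2 * n := by
    intro ξ hξ
    rw [hWelf]
    calc ∑ m, ∑ w, (U m w + V m w) * ξ m w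
        ≤ ∑ m : Fin n, ∑ w, 2 * ξ m w := by
          refine Finset.sum_le_sum fun m _ => Finset.sum_le_sum fun w _ => ?_
          have := hξ.1 m w
          nlinarith [hUle m w, hVle m w, hUnn m w, hVnn m w]
      _ ≤ ∑ m : Fin n, 2 * 1 := by
          refine Finset.sum_le_sum fun m _ => ?_
          rw [← Finset.mul_sum]
          nlinarith [hξ.2.1 m]
      _ = 2 * n := by simp [mul_comm]
  -- welfare of integral matchings is a natural number
  have hNat : ∀ ξ : Fin n → Fin n → ℝ, IsIntegralM ξ → ∃ a : ℕ, welfare U V ξ = a := by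
    intro ξ hξ
    have h : ∀ p : Fin n × Fin n, ∃ a : ℕ, (U p.1 p.2 + V p.1 p.2) * ξ p.1 p.2 = a := by
      intro p
      obtain h1 | h1 := hU p.1 p.2 <;> obtain h2 | h2 := hV p.1 p.2 <;>
          obtain h3 | h3 := hξ p.1 p.2
      · exact ⟨0, by rw [h1, h2, h3]; norm_num⟩
      · exact ⟨0, by rw [h1, h2, h3]; norm_num⟩
      · exact ⟨0, by rw [h1, h2, h3]; norm_num⟩
      · exact ⟨1, by rw [h1, h2, h3]; norm_num⟩
      · exact ⟨0, by rw [h1, h2, h3]; norm_num⟩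
      · exact ⟨1, by rw [h1, h2, h3]; norm_num⟩
      · exact ⟨0, by rw [h1, h2, h3]; norm_num⟩
      · exact ⟨2, by rw [h1, h2, h3]; norm_num⟩
    choose g hg' using h
    refine ⟨∑ p : Fin n × Fin n, g p, ?_⟩
    rw [hWelf, ← Finset.sum_product']
    rw [Nat.cast_sum]
    exact Finset.sum_congr rfl fun p _ => hg' p
  -- Key comparison: any integral fractional matching has welfare at most that of μ
  have hB : ∀ ν, IsIntegralM ν → IsFrac ν → welfare U V ν ≤ welfare U V μ := by
    intro ν hνi hνf
    by_contra hlt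
    push_neg at hlt
    obtain ⟨a, ha⟩ := hNat μ hint
    obtain ⟨b, hb⟩ := hNat ν hνi
    have hab : a < b := by
      have : (a:ℝ) < b := by rw [← ha, ← hb]; exact hlt
      exact_mod_cast this
    have hab1 : (a:ℝ) + 1 ≤ b := by exact_mod_cast hab
    have h1 := hmax ν hνi hνf
    rw [hGid μ, hGid ν, ← hWelf μ, ← hWelf ν, ha, hb] at h1
    have hKν := hK0 ν hνf
    have hKμ2 := h2K μ hfr
    have hWμ2n := hW2n μ hfr
    have hWν2n := hW2n ν hνf
    rw [ha] at hKμ2 hWμ2n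
    rw [hb] at hWν2n
    have hcKν : 0 ≤ c * K ν := mul_nonneg hcpos.le hKν
    -- 1 ≤ c * K μ
    have h2 : 1 ≤ c * K μ := by linarith
    have h3 : (n:ℝ)^2 ≤ K μ := by
      have hcn : c * (n:ℝ)^2 = 1 := by rw [hc]; field_simp
      have hm2 := mul_le_mul_of_nonneg_right h2 (sq_nonneg (n:ℝ))
      calc (n:ℝ)^2 = 1 * (n:ℝ)^2 := by ring
        _ ≤ c * K μ * (n:ℝ)^2 := hm2
        _ = (c * (n:ℝ)^2) * K μ := by ring
        _ = K μ := by rw [hcn, one_mul]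
    -- then 2 n^2 + 1 ≤ a + 1 ≤ b ≤ 2 n : impossible
    nlinarith [sq_nonneg (2*(n:ℝ) - 1)]
  -- Part 1: stability
  have hstab : IsStable U V μ := by
    intro m w
    by_contra hcon
    push_neg at hcon
    obtain ⟨hum, hvw⟩ := hcon
    have huMnn : 0 ≤ uM U μ m :=
      Finset.sum_nonneg fun w' _ => mul_nonneg (hUnn m w') (hfr.1 m w')
    have hvWnn : 0 ≤ vW V μ w :=
      Finset.sum_nonneg fun m' _ => mul_nonneg (hVnn m' w) (hfr.1 m' w)
    have hU1 : U m w = 1 := by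
      rcases hU m w with h | h
      · exfalso; rw [h] at hum; linarith
      · exact h
    have hV1 : V m w = 1 := by
      rcases hV m w with h | h
      · exfalso; rw [h] at hvw; linarith
      · exact h
    have hum1 : uM U μ m < 1 := by rw [hU1] at hum; exact hum
    have hvw1 : vW V μ w < 1 := by rw [hV1] at hvw; exact hvw
    have hrow : ∀ w', μ m w' = 1 → U m w' = 0 := by
      intro w' h
      rcases hU m w' with h' | h'
      · exact h'
      · exfalso
        have h2 : (1:ℝ) ≤ uM U μ m := by
          have h3 := Finset.single_le_sum
            (f := fun w'' => U m w'' * μ m w'')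
            (fun i _ => mul_nonneg (hUnn m i) (hfr.1 m i)) (Finset.mem_univ w')
          simp only [h', h, one_mul] at h3
          exact h3
        linarith
    have hcol : ∀ m', μ m' w = 1 → V m' w = 0 := by
      intro m' h
      rcases hV m' w with h' | h'
      · exact h'
      · exfalso
        have h2 : (1:ℝ) ≤ vW V μ w := by
          have h3 := Finset.single_le_sum
            (f := fun m'' => V m'' w * μ m'' w)
            (fun i _ => mul_nonneg (hVnn i w) (hfr.1 i w)) (Finset.mem_univ m')
          simp only [h', h, one_mul] at h3
          exact h3
        linarith
    have hmw0 : μ m w = 0 := by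
      rcases hint m w with h | h
      · exact h
      · exfalso; have := hrow w h; rw [hU1] at this; norm_num at this
    -- the modified matching
    set ν : Fin n → Fin n → ℝ := fun m' w' =>
      if m' = m ∧ w' = w then 1 else if m' = m ∨ w' = w then 0 else μ m' w' with hν
    have hνval : ∀ m' w', m' ≠ m → ν m' w' = if w' = w then 0 else μ m' w' := by
      intro m' w' hm'
      rw [hν]
      by_cases hw' : w' = w <;> simp [hm', hw']
    have hνrow : ∀ w', ν m w' = if w' = w then 1 else 0 := by
      intro w'
      rw [hν]
      by_cases hw' : w' = w <;> simp [hw']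
    have hνi : IsIntegralM ν := by
      intro m' w'
      simp only [hν]
      split
      · right; rfl
      · split
        · left; rfl
        · exact hint m' w'
    have hνf : IsFrac ν := by
      refine ⟨?_, ?_, ?_⟩
      · intro m' w'
        simp only [hν]
        split
        · norm_num
        · split
          · exact le_rfl
          · exact hfr.1 m' w'
      · intro m'
        by_cases hm' : m' = m
        · subst hm'
          simp only [hνrow]
          simp
        · refine le_trans (Finset.sum_le_sum fun w' _ => ?_) (hfr.2.1 m')
          rw [hνval m' w' hm']
          split
          · exact hfr.1 m' w'
          · exact le_rfl
      · intro w'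
        by_cases hw' : w' = w
        · subst hw'
          have hval : ∀ m'', ν m'' w' = if m'' = m then 1 else 0 := by
            intro m''
            by_cases hm' : m'' = m
            · subst hm'; rw [hνrow]; simp
            · rw [hνval m'' w' hm']; simp [hm']
          simp only [hval]
          simp
        · refine le_trans (Finset.sum_le_sum fun m' _ => ?_) (hfr.2.2 w')
          by_cases hm' : m' = m
          · subst hm'
            rw [hνrow w', if_neg hw']
            exact hfr.1 m' w'
          · rw [hνval m' w' hm', if_neg hw']
    -- γ-values along row m and column w of μ are small
    have hSr : (∑ w', γ m w' * μ m w') ≤ 1 := by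
      calc (∑ w', γ m w' * μ m w') ≤ ∑ w', μ m w' := by
            refine Finset.sum_le_sum fun w' _ => ?_
            rcases hint m w' with h | h
            · rw [h]; simp
            · have hU0 := hrow w' h
              rw [h, mul_one, hg m w', hU0]
              have : ¬ ((0:ℝ) = 1 ∧ V m w' = 1) := by
                rintro ⟨h', -⟩; norm_num at h'
              rw [if_neg this]
              have := hVle m w'
              linarith
        _ ≤ 1 := hfr.2.1 m
    have hSc : (∑ m', γ m' w * μ m' w) ≤ 1 := by
      calc (∑ m', γ m' w * μ m' w) ≤ ∑ m', μ m' w := by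
            refine Finset.sum_le_sum fun m' _ => ?_
            rcases hint m' w with h | h
            · rw [h]; simp
            · have hV0 := hcol m' h
              rw [h, mul_one, hg m' w, hV0]
              have : ¬ (U m' w = 1 ∧ (0:ℝ) = 1) := by
                rintro ⟨-, h'⟩; norm_num at h'
              rw [if_neg this]
              have := hUle m' w
              linarith
        _ ≤ 1 := hfr.2.2 w
    have hgmw : γ m w = 2 + c := by
      rw [hγ m w, if_pos ⟨hU1, hV1⟩, hc]
    -- decompose both objectives
    have hdecμ : (∑ m', ∑ w', γ m' w' * μ m' w')
        = (∑ w', γ m w' * μ m w') + (∑ m' ∈ Finset.univ.erase m, γ m' w * μ m' w)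
          + ∑ m' ∈ Finset.univ.erase m, ∑ w' ∈ Finset.univ.erase w, γ m' w' * μ m' w' := by
      rw [← Finset.add_sum_erase _ _ (Finset.mem_univ m)]
      rw [add_assoc]
      congr 1
      rw [← Finset.sum_add_distrib]
      refine Finset.sum_congr rfl fun m' _ => ?_
      rw [← Finset.add_sum_erase _ _ (Finset.mem_univ w)]
    have hdecν : (∑ m', ∑ w', γ m' w' * ν m' w')
        = γ m w + ∑ m' ∈ Finset.univ.erase m, ∑ w' ∈ Finset.univ.erase w, γ m' w' * μ m' w' := by
      rw [← Finset.add_sum_erase _ _ (Finset.mem_univ m)]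
      congr 1
      · simp only [hνrow, mul_ite, mul_one, mul_zero]
        rw [Finset.sum_ite_eq' Finset.univ w (fun w' => γ m w'), if_pos (Finset.mem_univ w)]
      · refine Finset.sum_congr rfl fun m' hm' => ?_
        have hm'm : m' ≠ m := Finset.ne_of_mem_erase hm'
        rw [← Finset.add_sum_erase _ _ (Finset.mem_univ w)]
        rw [hνval m' w hm'm, if_pos rfl, mul_zero, zero_add]
        refine Finset.sum_congr rfl fun w' hw' => ?_
        rw [hνval m' w' hm'm, if_neg (Finset.ne_of_mem_erase hw')]
    have hScerase : (∑ m' ∈ Finset.univ.erase m, γ m' w * μ m' w) ≤ 1 := by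
      have : (∑ m' ∈ Finset.univ.erase m, γ m' w * μ m' w)
          = ∑ m', γ m' w * μ m' w := by
        rw [← Finset.add_sum_erase _ (fun m' => γ m' w * μ m' w) (Finset.mem_univ m),
          hmw0, mul_zero, zero_add]
      rw [this]; exact hSc
    have hcontra := hmax ν hνi hνf
    rw [hdecμ, hdecν, hgmw] at hcontra
    linarith
  refine ⟨hstab, ?_⟩
  -- Part 2: fractional welfare maximality, via Birkhoff
  intro μ' hμ'
  obtain ⟨hp, hr, hcl⟩ := hμ'
  -- the doubling to a doubly stochastic matrix
  set σ : Matrix (Fin n ⊕ Fin n) (Fin n ⊕ Fin n) ℝ := fun i j =>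
    match i, j with
    | Sum.inl m, Sum.inl w => μ' m w
    | Sum.inl m, Sum.inr i => if i = m then 1 - ∑ w, μ' m w else 0
    | Sum.inr j, Sum.inl w => if j = w then 1 - ∑ m, μ' m w else 0
    | Sum.inr j, Sum.inr i => μ' i j
    with hσ
  have hσds : σ ∈ doublyStochastic ℝ (Fin n ⊕ Fin n) := by
    rw [mem_doublyStochastic_iff_sum]
    refine ⟨?_, ?_, ?_⟩
    · rintro (m | j) (w | i) <;> simp only [hσ]
      · exact hp m w
      · split
        · linarith [hr m]
        · exact le_rfl
      · split
        · linarith [hcl w]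
        · exact le_rfl
      · exact hp i j
    · rintro (m | j) <;> rw [Fintype.sum_sum_type] <;> simp only [hσ]
      · rw [Finset.sum_ite_eq' Finset.univ m (fun _ => 1 - ∑ w, μ' m w),
          if_pos (Finset.mem_univ m)]
        ring
      · rw [Finset.sum_ite_eq Finset.univ j (fun x => 1 - ∑ m, μ' m x),
          if_pos (Finset.mem_univ j)]
        ring
    · rintro (w | i) <;> rw [Fintype.sum_sum_type] <;> simp only [hσ]
      · rw [Finset.sum_ite_eq' Finset.univ w (fun _ => 1 - ∑ m, μ' m w),
          if_pos (Finset.mem_univ w)]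
        ring
      · rw [Finset.sum_ite_eq Finset.univ i (fun x => 1 - ∑ w, μ' x w),
          if_pos (Finset.mem_univ i)]
        ring
  obtain ⟨wt, hwt0, hwt1, hwtsum⟩ := exists_eq_sum_perm_of_mem_doublyStochastic hσds
  -- matching associated to a permutation
  have hperm : ∀ π : Equiv.Perm (Fin n ⊕ Fin n),
      welfare U V (fun m w => if π (Sum.inl m) = Sum.inl w then (1:ℝ) else 0)
        ≤ welfare U V μ := by
    intro π
    set ν : Fin n → Fin n → ℝ :=
      fun m w => if π (Sum.inl m) = Sum.inl w then (1:ℝ) else 0 with hνdef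
    refine hB ν ?_ ?_
    · intro m w
      simp only [hνdef]
      split
      · right; rfl
      · left; rfl
    · refine ⟨?_, ?_, ?_⟩
      · intro m w; simp only [hνdef]; split <;> norm_num
      · intro m
        simp only [hνdef]
        rcases h : π (Sum.inl m) with w0 | j
        · simp only [h, Sum.inl.injEq]
          rw [Finset.sum_ite_eq Finset.univ w0 (fun _ => (1:ℝ)),
            if_pos (Finset.mem_univ w0)]
        · simp [h]
      · intro w
        simp only [hνdef, Equiv.apply_eq_iff_eq_symm_apply]
        rcases h : π.symm (Sum.inl w) with m0 | j
        · simp only [h, Sum.inl.injEq]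
          rw [Finset.sum_ite_eq' Finset.univ m0 (fun _ => (1:ℝ)),
            if_pos (Finset.mem_univ m0)]
        · simp [h]
  -- welfare μ' as a convex combination
  have hwelfσ : welfare U V μ' = ∑ π : Equiv.Perm (Fin n ⊕ Fin n),
      wt π * welfare U V (fun m w => if π (Sum.inl m) = Sum.inl w then (1:ℝ) else 0) := by
    rw [hWelf]
    have hentry : ∀ m w : Fin n, μ' m w
        = ∑ π : Equiv.Perm (Fin n ⊕ Fin n),
            wt π * (if π (Sum.inl m) = Sum.inl w then (1:ℝ) else 0) := by
      intro m w
      have h0 := congrFun (congrFun hwtsum (Sum.inl m)) (Sum.inl w)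
      have h1 : σ (Sum.inl m) (Sum.inl w) = μ' m w := rfl
      rw [h1] at h0
      rw [← h0, Matrix.sum_apply]
      refine Finset.sum_congr rfl fun π _ => ?_
      rw [Matrix.smul_apply, smul_eq_mul]
      congr 1
      simp [PEquiv.toMatrix_apply, Equiv.toPEquiv_apply, Option.mem_def]
    calc (∑ m, ∑ w, (U m w + V m w) * μ' m w)
        = ∑ m, ∑ w, ∑ π : Equiv.Perm (Fin n ⊕ Fin n),
            wt π * ((U m w + V m w) * (if π (Sum.inl m) = Sum.inl w then (1:ℝ) else 0)) := by
          refine Finset.sum_congr rfl fun m _ => Finset.sum_congr rfl fun w _ => ?_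
          rw [hentry m w, Finset.mul_sum]
          exact Finset.sum_congr rfl fun π _ => by ring
      _ = ∑ m, ∑ π : Equiv.Perm (Fin n ⊕ Fin n), ∑ w,
            wt π * ((U m w + V m w) * (if π (Sum.inl m) = Sum.inl w then (1:ℝ) else 0)) :=
          Finset.sum_congr rfl fun m _ => Finset.sum_comm
      _ = ∑ π : Equiv.Perm (Fin n ⊕ Fin n), ∑ m, ∑ w,
            wt π * ((U m w + V m w) * (if π (Sum.inl m) = Sum.inl w then (1:ℝ) else 0)) :=
          Finset.sum_comm
      _ = ∑ π : Equiv.Perm (Fin n ⊕ Fin n),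
            wt π * ∑ m, ∑ w, (U m w + V m w)
              * (if π (Sum.inl m) = Sum.inl w then (1:ℝ) else 0) := by
          refine Finset.sum_congr rfl fun π _ => ?_
          rw [Finset.mul_sum]
          exact Finset.sum_congr rfl fun m _ => by rw [Finset.mul_sum]
      _ = _ := by
          refine Finset.sum_congr rfl fun π _ => ?_
          rw [hWelf]
  calc welfare U V μ' = _ := hwelfσ
    _ ≤ ∑ π : Equiv.Perm (Fin n ⊕ Fin n), wt π * welfare U V μ := by
        refine Finset.sum_le_sum fun π _ => ?_
        exact mul_le_mul_of_nonneg_left (hperm π) (hwt0 π)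
    _ = welfare U V μ := by
        rw [← Finset.sum_mul, hwt1, one_mul]
end

section
/- Let I be an SMC instance, ε ∈ [0,1], μs a stable integral matching for I, and μopt a welfare-maximizing (not necessarily stable) matching for I. Then the fractional matching μ = (1−ε)·μs + ε·μopt is ε-stable and satisfies W(μ) ≥ ε·W(μopt). In particular, W(μ) is at least ε times the welfare of any ε-stable fractional matching. -/
open Finset

/-- ε-stability: every pair is ε-stable. -/
def EpsStable {n : ℕ} (U V : Fin n → Fin n → ℝ) (ε : ℝ) (μ : Fin n → Fin n → ℝ) : Prop :=
  ∀ m w, (1 - ε) * U m w ≤ uM U μ m ∨ (1 - ε) * V m w ≤ vW V μ w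

theorem stmt7 {n : ℕ} (U V : Fin n → Fin n → ℝ)
    (hU : ∀ m w, 0 ≤ U m w) (hV : ∀ m w, 0 ≤ V m w)
    (ε : ℝ) (hε0 : 0 ≤ ε) (hε1 : ε ≤ 1)
    (μs : Fin n → Fin n → ℝ) (hsint : IsIntegralM μs) (hsfr : IsFrac μs)
    (hsstab : IsStable U V μs)
    (μopt : Fin n → Fin n → ℝ) (hofr : IsFrac μopt)
    (hopt : ∀ μ', IsFrac μ' → welfare U V μ' ≤ welfare U V μopt) :
    IsFrac (fun m w => (1 - ε) * μs m w + ε * μopt m w) ∧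
    EpsStable U V ε (fun m w => (1 - ε) * μs m w + ε * μopt m w) ∧
    ε * welfare U V μopt ≤ welfare U V (fun m w => (1 - ε) * μs m w + ε * μopt m w) ∧
    ∀ ν, IsFrac ν → EpsStable U V ε ν →
      ε * welfare U V ν ≤ welfare U V (fun m w => (1 - ε) * μs m w + ε * μopt m w) := by

  have h1ε : 0 ≤ 1 - ε := by linarith
  set μ : Fin n → Fin n → ℝ := fun m w => (1 - ε) * μs m w + ε * μopt m w with hμ
  have huM : ∀ m, uM U μ m = (1 - ε) * uM U μs m + ε * uM U μopt m := by
    intro m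
    simp only [uM, hμ, Finset.mul_sum]
    rw [← Finset.sum_add_distrib]
    apply Finset.sum_congr rfl; intro w _; ring
  have hvW : ∀ w, vW V μ w = (1 - ε) * vW V μs w + ε * vW V μopt w := by
    intro w
    simp only [vW, hμ, Finset.mul_sum]
    rw [← Finset.sum_add_distrib]
    apply Finset.sum_congr rfl; intro m _; ring
  have huMnn : ∀ (ρ : Fin n → Fin n → ℝ), IsFrac ρ → ∀ m, 0 ≤ uM U ρ m := by
    intro ρ hρ m
    exact Finset.sum_nonneg fun w _ => mul_nonneg (hU m w) (hρ.1 m w)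
  have hvWnn : ∀ (ρ : Fin n → Fin n → ℝ), IsFrac ρ → ∀ w, 0 ≤ vW V ρ w := by
    intro ρ hρ w
    exact Finset.sum_nonneg fun m _ => mul_nonneg (hV m w) (hρ.1 m w)
  have hfrac : IsFrac μ := by
    refine ⟨fun m w => ?_, fun m => ?_, fun w => ?_⟩
    · exact add_nonneg (mul_nonneg h1ε (hsfr.1 m w)) (mul_nonneg hε0 (hofr.1 m w))
    · simp only [hμ]
      rw [Finset.sum_add_distrib, ← Finset.mul_sum, ← Finset.mul_sum]
      have := hsfr.2.1 m; have := hofr.2.1 m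
      nlinarith [hsfr.2.1 m, hofr.2.1 m]
    · simp only [hμ]
      rw [Finset.sum_add_distrib, ← Finset.mul_sum, ← Finset.mul_sum]
      nlinarith [hsfr.2.2 w, hofr.2.2 w]
  have hwelf : welfare U V μ = (1 - ε) * welfare U V μs + ε * welfare U V μopt := by
    simp only [welfare]
    rw [Finset.sum_congr rfl (fun m _ => huM m), Finset.sum_congr rfl (fun w _ => hvW w),
      Finset.sum_add_distrib, Finset.sum_add_distrib, ← Finset.mul_sum, ← Finset.mul_sum,
      ← Finset.mul_sum, ← Finset.mul_sum]
    ring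
  have hws : 0 ≤ welfare U V μs := by
    refine add_nonneg (Finset.sum_nonneg fun m _ => huMnn μs hsfr m)
      (Finset.sum_nonneg fun w _ => hvWnn μs hsfr w)
  have hmain : ε * welfare U V μopt ≤ welfare U V μ := by
    rw [hwelf]; nlinarith
  refine ⟨hfrac, ?_, hmain, ?_⟩
  · intro m w
    rcases hsstab m w with h | h
    · left
      rw [huM m]
      have := huMnn μopt hofr m
      nlinarith
    · right
      rw [hvW w]
      have := hvWnn μopt hofr w
      nlinarith
  · intro ν hνfr _
    have := hopt ν hνfr
    nlinarith
end

section
/- Witness lemma for the two-phase algorithm: Let I be an SMC instance with smallest and largest nonzero valuations σ_min and σ_max. Call a pair (m,w) heavy if U(m,w) > 0 and V(m,w) > 0, and light otherwise. Let μ1 be an integral matching using only heavy pairs that is stable with respect to heavy pairs (i.e., no heavy pair (m,w) outside μ1 has both u_m(μ1) < U(m,w) and v_w(μ1) < V(m,w)), and let μopt be any integral matching. Let μopt_1 be the set of pairs of μopt sharing an agent with some pair of μ1. Then W(μ1 \ μopt_1) ≥ (1 + σ_max/σ_min)^{-1} · W(μopt_1 \ μ1), where for a set S of pairs, W(S) =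 ∑_{(m,w)∈S} (U(m,w)+V(m,w)). -/
open Finset

/-- A set of pairwise agent-disjoint man-woman pairs. -/
def IsMatchingSet {n : ℕ} (S : Finset (Fin n × Fin n)) : Prop :=
  ∀ p ∈ S, ∀ q ∈ S, p ≠ q → p.1 ≠ q.1 ∧ p.2 ≠ q.2

/-- Welfare of a set of pairs. -/
def WSet {n : ℕ} (U V : Fin n → Fin n → ℝ) (S : Finset (Fin n × Fin n)) : ℝ :=
  ∑ p ∈ S, (U p.1 p.2 + V p.1 p.2)

lemma aux_bound10 (σmin σmax a b x : ℝ) (hσ : 0 < σmin) (hσ2 : σmin ≤ σmax)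
    (hx : σmin ≤ x) (hab : a + b ≤ x + σmax) :
    a + b ≤ (1 + σmax / σmin) * x := by
  have h1 : σmax / σmin * σmin = σmax := div_mul_cancel₀ _ hσ.ne'
  have hd : 0 ≤ σmax / σmin := div_nonneg (le_trans hσ.le hσ2) hσ.le
  nlinarith [mul_le_mul_of_nonneg_left hx hd]

theorem stmt10 {n : ℕ} (U V : Fin n → Fin n → ℝ)
    (hU : ∀ m w, 0 ≤ U m w) (hV : ∀ m w, 0 ≤ V m w)
    (σmin σmax : ℝ) (hσ : 0 < σmin)
    (hUb : ∀ m w, U m w ≠ 0 → σmin ≤ U m w ∧ U m w ≤ σmax)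
    (hVb : ∀ m w, V m w ≠ 0 → σmin ≤ V m w ∧ V m w ≤ σmax)
    (μ1 : Finset (Fin n × Fin n)) (hμ1 : IsMatchingSet μ1)
    (hheavy : ∀ p ∈ μ1, 0 < U p.1 p.2 ∧ 0 < V p.1 p.2)
    (hstab : ∀ m w, 0 < U m w → 0 < V m w →
        (∃ w', (m, w') ∈ μ1 ∧ U m w ≤ U m w') ∨ (∃ m', (m', w) ∈ μ1 ∧ V m w ≤ V m' w))
    (μopt : Finset (Fin n × Fin n)) (hμopt : IsMatchingSet μopt)
    (μopt1 : Finset (Fin n × Fin n))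
    (hdef : ∀ p, p ∈ μopt1 ↔ p ∈ μopt ∧ ∃ q ∈ μ1, p.1 = q.1 ∨ p.2 = q.2) :
    (1 + σmax / σmin)⁻¹ * WSet U V (μopt1 \ μ1) ≤ WSet U V (μ1 \ μopt1) := by
  classical
  have hBnn : 0 ≤ WSet U V (μ1 \ μopt1) :=
    Finset.sum_nonneg fun p _ => add_nonneg (hU _ _) (hV _ _)
  rcases (μopt1 \ μ1).eq_empty_or_nonempty with he | hne
  · have h0 : WSet U V (μopt1 \ μ1) = 0 := by rw [he]; simp [WSet]
    rw [h0, mul_zero]; exact hBnn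
  -- nonempty case: get σmin ≤ σmax
  obtain ⟨p0, hp0⟩ := hne
  have hp0' := (hdef p0).mp (Finset.mem_sdiff.mp hp0).1
  obtain ⟨-, q0, hq0, -⟩ := hp0'
  have hσ2 : σmin ≤ σmax := by
    have h := hUb q0.1 q0.2 (ne_of_gt (hheavy q0 hq0).1)
    linarith [h.1, h.2]
  have hCpos : 0 < 1 + σmax / σmin := by
    have := div_pos (lt_of_lt_of_le hσ hσ2) hσ; linarith
  set C := 1 + σmax / σmin with hCdef
  rw [inv_mul_le_iff₀ hCpos]
  set s := μopt1 \ μ1 with hs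
  set t := μ1 \ μopt1 with ht
  -- key charging lemma
  have key : ∀ p ∈ s, ∃ x : (Fin n × Fin n) × Bool,
      x.1 ∈ t ∧
      (x.2 = true → p.1 = x.1.1 ∧ U p.1 p.2 + V p.1 p.2 ≤ C * U x.1.1 x.1.2) ∧
      (x.2 = false → p.2 = x.1.2 ∧ U p.1 p.2 + V p.1 p.2 ≤ C * V x.1.1 x.1.2) := by
    intro p hp
    obtain ⟨hp1, hpn1⟩ := Finset.mem_sdiff.mp hp
    obtain ⟨hpopt, q1, hq1, hshare⟩ := (hdef p).mp hp1
    have hnotopt : ∀ q ∈ μ1, (p.1 = q.1 ∨ p.2 = q.2) → q ∈ t := by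
      intro q hq hsh
      refine Finset.mem_sdiff.mpr ⟨hq, fun hqopt1 => ?_⟩
      have hqopt : q ∈ μopt := ((hdef q).mp hqopt1).1
      have hne : p ≠ q := fun h => hpn1 (h ▸ hq)
      have h2 := hμopt p hpopt q hqopt hne
      rcases hsh with h | h
      · exact h2.1 h
      · exact h2.2 h
    by_cases hhp : 0 < U p.1 p.2 ∧ 0 < V p.1 p.2
    · rcases hstab p.1 p.2 hhp.1 hhp.2 with ⟨w', hw', hle⟩ | ⟨m', hm', hle⟩
      · refine ⟨((p.1, w'), true), hnotopt _ hw' (Or.inl rfl), fun _ => ⟨rfl, ?_⟩,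
          fun h => by simp at h⟩
        have hxmin : σmin ≤ U p.1 w' :=
          (hUb _ _ (ne_of_gt (hheavy _ hw').1)).1
        have hVle : V p.1 p.2 ≤ σmax := (hVb _ _ (ne_of_gt hhp.2)).2
        exact aux_bound10 σmin σmax _ _ _ hσ hσ2 hxmin (by linarith)
      · refine ⟨((m', p.2), false), hnotopt _ hm' (Or.inr rfl),
          fun h => by simp at h, fun _ => ⟨rfl, ?_⟩⟩
        have hxmin : σmin ≤ V m' p.2 :=
          (hVb _ _ (ne_of_gt (hheavy _ hm').2)).1
        have hUle : U p.1 p.2 ≤ σmax := (hUb _ _ (ne_of_gt hhp.1)).2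
        exact aux_bound10 σmin σmax _ _ _ hσ hσ2 hxmin (by linarith)
    · -- light pair: one coordinate is zero
      have hzero : U p.1 p.2 = 0 ∨ V p.1 p.2 = 0 := by
        by_contra h
        push_neg at h
        exact hhp ⟨(hU _ _).lt_of_ne (Ne.symm h.1), (hV _ _).lt_of_ne (Ne.symm h.2)⟩
      have hsum : U p.1 p.2 + V p.1 p.2 ≤ σmax := by
        rcases hzero with h | h
        · rw [h, zero_add]
          by_cases h2 : V p.1 p.2 = 0
          · rw [h2]; linarith
          · exact (hVb _ _ h2).2
        · rw [h, add_zero]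
          by_cases h2 : U p.1 p.2 = 0
          · rw [h2]; linarith
          · exact (hUb _ _ h2).2
      rcases hshare with h | h
      · refine ⟨(q1, true), hnotopt _ hq1 (Or.inl h), fun _ => ⟨h, ?_⟩,
          fun hf => by simp at hf⟩
        have hxmin : σmin ≤ U q1.1 q1.2 := (hUb _ _ (ne_of_gt (hheavy _ hq1).1)).1
        exact aux_bound10 σmin σmax _ _ _ hσ hσ2 hxmin (by linarith)
      · refine ⟨(q1, false), hnotopt _ hq1 (Or.inr h), fun hf => by simp at hf,
          fun _ => ⟨h, ?_⟩⟩
        have hxmin : σmin ≤ V q1.1 q1.2 := (hVb _ _ (ne_of_gt (hheavy _ hq1).2)).1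
        exact aux_bound10 σmin σmax _ _ _ hσ hσ2 hxmin (by linarith)
  choose F hF1 hF2 hF3 using key
  -- side-value function
  set h : (Fin n × Fin n) × Bool → ℝ :=
    fun x => if x.2 then U x.1.1 x.1.2 else V x.1.1 x.1.2 with hh
  have hhnn : ∀ x, 0 ≤ h x := by
    intro x; rw [hh]; dsimp only
    split
    · exact hU _ _
    · exact hV _ _
  -- pointwise bound
  have step1 : WSet U V s ≤ ∑ p ∈ s.attach, C * h (F p.1 p.2) := by
    rw [WSet, ← Finset.sum_attach s]
    refine Finset.sum_le_sum fun p _ => ?_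
    rcases Bool.eq_false_or_eq_true (F p.1 p.2).2 with hb | hb
    · have := (hF2 p.1 p.2 hb).2
      rw [hh]; dsimp only; rw [hb]; simpa using this
    · have := (hF3 p.1 p.2 hb).2
      rw [hh]; dsimp only; rw [hb]; simpa using this
  -- injectivity of the charging map on s.attach
  have hsub : s ⊆ μopt := fun p hp => ((hdef p).mp (Finset.mem_sdiff.mp hp).1).1
  have hinj : Set.InjOn (fun p : {x // x ∈ s} => F p.1 p.2) s.attach := by
    intro p _ p' _ hpp'
    simp only at hpp'
    have hp : p.1 ∈ μopt := hsub p.2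
    have hp' : p'.1 ∈ μopt := hsub p'.2
    have heq : p.1 = p'.1 := by
      by_contra hne
      have h2 := hμopt p.1 hp p'.1 hp' (fun h => hne h)
      rcases Bool.eq_false_or_eq_true (F p.1 p.2).2 with hb | hb
      · have h1 := (hF2 p.1 p.2 hb).1
        have h1' := (hF2 p'.1 p'.2 (hpp' ▸ hb)).1
        exact h2.1 (by rw [h1, h1', hpp'])
      · have h1 := (hF3 p.1 p.2 hb).1
        have h1' := (hF3 p'.1 p'.2 (hpp' ▸ hb)).1
        exact h2.2 (by rw [h1, h1', hpp'])
    exact Subtype.ext heq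
  have step2 : ∑ p ∈ s.attach, h (F p.1 p.2) = ∑ x ∈ s.attach.image (fun p => F p.1 p.2), h x :=
    (Finset.sum_image (fun p hp q hq hpq => hinj hp hq hpq)).symm
  have step3 : s.attach.image (fun p => F p.1 p.2) ⊆ t ×ˢ (Finset.univ : Finset Bool) := by
    intro x hx
    obtain ⟨p, _, rfl⟩ := Finset.mem_image.mp hx
    exact Finset.mem_product.mpr ⟨hF1 p.1 p.2, Finset.mem_univ _⟩
  have step4 : ∑ x ∈ t ×ˢ (Finset.univ : Finset Bool), h x = WSet U V t := by
    rw [Finset.sum_product, WSet]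
    refine Finset.sum_congr rfl fun q _ => ?_
    rw [hh]; simp
  calc WSet U V s ≤ ∑ p ∈ s.attach, C * h (F p.1 p.2) := step1
    _ = C * ∑ p ∈ s.attach, h (F p.1 p.2) := by rw [Finset.mul_sum]
    _ = C * ∑ x ∈ s.attach.image (fun p => F p.1 p.2), h x := by rw [step2]
    _ ≤ C * ∑ x ∈ t ×ˢ (Finset.univ : Finset Bool), h x := by
        refine mul_le_mul_of_nonneg_left ?_ hCpos.le
        exact Finset.sum_le_sum_of_subset_of_nonneg step3 fun x _ _ => hhnn x
    _ = C * WSet U V t := by rw [step4]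
end

section
/- Combining the witness lemma: under the hypotheses of the witness lemma, if additionally μ2 is a maximum-welfare integral matching among light pairs that are disjoint from the agents matched in μ1, and μ = μ1 ∪ μ2, then μ is a stable integral matching and W(μ) ≥ (1 + σ_max/σ_min)^{-1} · W(μopt) for every integral matching μopt. -/
open Finset

/-- Utility of man `m` under a matching given as a set of pairs. -/
def uMS {n : ℕ} (U : Fin n → Fin n → ℝ) (S : Finset (Fin n × Fin n)) (m : Fin n) : ℝ :=
  ∑ p ∈ S.filter (fun p => p.1 = m), U p.1 p.2

/-- Utility of woman `w` under a matching given as a set of pairs. -/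
def vWS {n : ℕ} (V : Fin n → Fin n → ℝ) (S : Finset (Fin n × Fin n)) (w : Fin n) : ℝ :=
  ∑ p ∈ S.filter (fun p => p.2 = w), V p.1 p.2

/-- Stability of an integral matching given as a set of pairs. -/
def IsStableSet {n : ℕ} (U V : Fin n → Fin n → ℝ) (S : Finset (Fin n × Fin n)) : Prop :=
  ∀ m w, U m w ≤ uMS U S m ∨ V m w ≤ vWS V S w

theorem stmt11 {n : ℕ} (U V : Fin n → Fin n → ℝ)
    (hU : ∀ m w, 0 ≤ U m w) (hV : ∀ m w, 0 ≤ V m w)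
    (σmin σmax : ℝ) (hσ : 0 < σmin)
    (hUb : ∀ m w, U m w ≠ 0 → σmin ≤ U m w ∧ U m w ≤ σmax)
    (hVb : ∀ m w, V m w ≠ 0 → σmin ≤ V m w ∧ V m w ≤ σmax)
    (μ1 : Finset (Fin n × Fin n)) (hμ1 : IsMatchingSet μ1)
    (hheavy : ∀ p ∈ μ1, 0 < U p.1 p.2 ∧ 0 < V p.1 p.2)
    (hstab : ∀ m w, 0 < U m w → 0 < V m w →
        (∃ w', (m, w') ∈ μ1 ∧ U m w ≤ U m w') ∨ (∃ m', (m', w) ∈ μ1 ∧ V m w ≤ V m' w))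
    (μ2 : Finset (Fin n × Fin n)) (hμ2 : IsMatchingSet μ2)
    (hlight : ∀ p ∈ μ2, U p.1 p.2 = 0 ∨ V p.1 p.2 = 0)
    (hdisj : ∀ p ∈ μ2, ∀ q ∈ μ1, p.1 ≠ q.1 ∧ p.2 ≠ q.2)
    (hmax : ∀ ν : Finset (Fin n × Fin n), IsMatchingSet ν →
        (∀ p ∈ ν, (U p.1 p.2 = 0 ∨ V p.1 p.2 = 0) ∧ ∀ q ∈ μ1, p.1 ≠ q.1 ∧ p.2 ≠ q.2) →
        WSet U V ν ≤ WSet U V μ2) :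
    IsMatchingSet (μ1 ∪ μ2) ∧ IsStableSet U V (μ1 ∪ μ2) ∧
    ∀ μopt : Finset (Fin n × Fin n), IsMatchingSet μopt →
      (1 + σmax / σmin)⁻¹ * WSet U V μopt ≤ WSet U V (μ1 ∪ μ2) := by
  classical
  have hdisj12 : Disjoint μ1 μ2 := by
    rw [Finset.disjoint_left]
    intro p hp1 hp2
    exact (hdisj p hp2 p hp1).1 rfl
  have hWunion : WSet U V (μ1 ∪ μ2) = WSet U V μ1 + WSet U V μ2 := by
    unfold WSet; rw [Finset.sum_union hdisj12]
  have hmatch : IsMatchingSet (μ1 ∪ μ2) := by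
    intro p hp q hq hpq
    rcases Finset.mem_union.1 hp with hp1 | hp2 <;>
      rcases Finset.mem_union.1 hq with hq1 | hq2
    · exact hμ1 p hp1 q hq1 hpq
    · exact ⟨(hdisj q hq2 p hp1).1.symm, (hdisj q hq2 p hp1).2.symm⟩
    · exact hdisj p hp2 q hq1
    · exact hμ2 p hp2 q hq2 hpq
  have hstable : IsStableSet U V (μ1 ∪ μ2) := by
    intro m w
    by_cases hu : 0 < U m w
    · by_cases hv : 0 < V m w
      · rcases hstab m w hu hv with ⟨w', hw', hle⟩ | ⟨m', hm', hle⟩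
        · left
          refine hle.trans ?_
          have hmem : (m, w') ∈ (μ1 ∪ μ2).filter (fun p => p.1 = m) := by
            simp [Finset.mem_filter, Finset.mem_union, hw']
          exact Finset.single_le_sum (f := fun p => U p.1 p.2)
            (fun p _ => hU p.1 p.2) hmem
        · right
          refine hle.trans ?_
          have hmem : (m', w) ∈ (μ1 ∪ μ2).filter (fun p => p.2 = w) := by
            simp [Finset.mem_filter, Finset.mem_union, hm']
          exact Finset.single_le_sum (f := fun p => V p.1 p.2)
            (fun p _ => hV p.1 p.2) hmem
      · right
        have : V m w = 0 := le_antisymm (not_lt.1 hv) (hV m w)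
        rw [this]
        exact Finset.sum_nonneg fun p _ => hV p.1 p.2
    · left
      have : U m w = 0 := le_antisymm (not_lt.1 hu) (hU m w)
      rw [this]
      exact Finset.sum_nonneg fun p _ => hU p.1 p.2
  refine ⟨hmatch, hstable, ?_⟩
  intro μopt hopt
  by_cases hcase : σmin ≤ σmax
  swap
  · -- all valuations are zero
    have hzU : ∀ m w, U m w = 0 := by
      intro m w; by_contra h
      exact hcase ((hUb m w h).1.trans (hUb m w h).2)
    have hzV : ∀ m w, V m w = 0 := by
      intro m w; by_contra h
      exact hcase ((hVb m w h).1.trans (hVb m w h).2)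
    have hz : ∀ T : Finset (Fin n × Fin n), WSet U V T = 0 := fun T =>
      Finset.sum_eq_zero (by simp [hzU, hzV])
    rw [hz μopt, hz (μ1 ∪ μ2), mul_zero]
  · have hσmax : 0 < σmax := lt_of_lt_of_le hσ hcase
    set ρ := σmax / σmin with hρdef
    have hρ : 0 < ρ := div_pos hσmax hσ
    have hρσ : ρ * σmin = σmax := div_mul_cancel₀ σmax hσ.ne'
    -- split μopt
    set P : Fin n × Fin n → Prop :=
      fun p => (0 < U p.1 p.2 ∧ 0 < V p.1 p.2) ∨ ∃ q ∈ μ1, p.1 = q.1 ∨ p.2 = q.2 with hPdef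
    set S := μopt.filter P with hSdef
    set L2 := μopt.filter (fun p => ¬ P p) with hL2def
    have hSopt : ∀ p ∈ S, p ∈ μopt := fun p hp => (Finset.mem_filter.1 hp).1
    have hsplit : WSet U V μopt = WSet U V S + WSet U V L2 := by
      unfold WSet
      rw [hSdef, hL2def, Finset.sum_filter_add_sum_filter_not]
    -- L2 bound via hmax
    have hL2 : WSet U V L2 ≤ WSet U V μ2 := by
      apply hmax
      · intro p hp q hq hpq
        exact hopt p (Finset.mem_filter.1 hp).1 q (Finset.mem_filter.1 hq).1 hpq
      · intro p hp
        have hnp : ¬ ((0 < U p.1 p.2 ∧ 0 < V p.1 p.2) ∨ ∃ q ∈ μ1, p.1 = q.1 ∨ p.2 = q.2) :=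
          (Finset.mem_filter.1 hp).2
        push_neg at hnp
        obtain ⟨h1, h2⟩ := hnp
        constructor
        · by_cases hu : 0 < U p.1 p.2
          · right; exact le_antisymm (h1 hu) (hV p.1 p.2)
          · left; exact le_antisymm (not_lt.1 hu) (hU p.1 p.2)
        · exact h2
    -- the charging function
    set g : (Fin n × Fin n) × Bool → ℝ :=
      fun x => if x.2 then U x.1.1 x.1.2 else V x.1.1 x.1.2 with hgdef
    have hgnn : ∀ x, 0 ≤ g x := by
      intro x; rw [hgdef]; dsimp only
      split
      · exact hU _ _
      · exact hV _ _
    have hex : ∀ p : Fin n × Fin n, ∃ x : (Fin n × Fin n) × Bool, p ∈ S →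
        x.1 ∈ μ1 ∧ ((x.2 = true ∧ x.1.1 = p.1) ∨ (x.2 = false ∧ x.1.2 = p.2)) ∧
          U p.1 p.2 + V p.1 p.2 ≤ g x + σmax := by
      intro p
      by_cases hp : p ∈ S
      swap
      · exact ⟨(p, true), fun h => absurd h hp⟩
      have hPp := (Finset.mem_filter.1 hp).2
      by_cases hheavyp : 0 < U p.1 p.2 ∧ 0 < V p.1 p.2
      · rcases hstab p.1 p.2 hheavyp.1 hheavyp.2 with ⟨w', hw', hle⟩ | ⟨m', hm', hle⟩
        · refine ⟨((p.1, w'), true), fun _ => ⟨hw', Or.inl ⟨rfl, rfl⟩, ?_⟩⟩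
          have hVle : V p.1 p.2 ≤ σmax := (hVb _ _ hheavyp.2.ne').2
          simp only [hgdef, if_true]
          linarith
        · refine ⟨((m', p.2), false), fun _ => ⟨hm', Or.inr ⟨rfl, rfl⟩, ?_⟩⟩
          have hUle : U p.1 p.2 ≤ σmax := (hUb _ _ hheavyp.1.ne').2
          simp only [hgdef]
          simp only [Bool.false_eq_true, if_false]
          linarith
      · have hlightp : U p.1 p.2 + V p.1 p.2 ≤ σmax := by
          by_cases hUz : U p.1 p.2 = 0
          · rw [hUz, zero_add]
            by_cases hVz : V p.1 p.2 = 0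
            · rw [hVz]; exact hσmax.le
            · exact (hVb _ _ hVz).2
          · have hVz : V p.1 p.2 = 0 := by
              by_contra hVz
              exact hheavyp ⟨(hU _ _).lt_of_ne' hUz, (hV _ _).lt_of_ne' hVz⟩
            rw [hVz, add_zero]; exact (hUb _ _ hUz).2
        have hshare := hPp.resolve_left hheavyp
        obtain ⟨q, hq, hq1 | hq2⟩ := hshare
        · refine ⟨(q, true), fun _ => ⟨hq, Or.inl ⟨rfl, hq1.symm⟩, ?_⟩⟩
          have := hU q.1 q.2
          simp only [hgdef, if_true]
          linarith
        · refine ⟨(q, false), fun _ => ⟨hq, Or.inr ⟨rfl, hq2.symm⟩, ?_⟩⟩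
          have := hV q.1 q.2
          simp only [hgdef]
          simp only [Bool.false_eq_true, if_false]
          linarith
    choose F hF using hex
    have hinj : ∀ p ∈ S, ∀ p' ∈ S, F p = F p' → p = p' := by
      intro p hp p' hp' heq
      by_contra hne
      have h1 := (hF p hp).2.1
      have h2 := (hF p' hp').2.1
      rw [heq] at h1
      rcases h1 with ⟨hb, he⟩ | ⟨hb, he⟩ <;> rcases h2 with ⟨hb', he'⟩ | ⟨hb', he'⟩
      · exact (hopt p (hSopt p hp) p' (hSopt p' hp') hne).1 (he.symm.trans he')
      · rw [hb] at hb'; exact Bool.true_eq_false ▸ (by simp at hb')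
      · rw [hb] at hb'; exact (by simp at hb')
      · exact (hopt p (hSopt p hp) p' (hSopt p' hp') hne).2 (he.symm.trans he')
    have hsub : S.image F ⊆ μ1 ×ˢ (Finset.univ : Finset Bool) := by
      intro x hx
      obtain ⟨p, hp, rfl⟩ := Finset.mem_image.1 hx
      exact Finset.mem_product.2 ⟨(hF p hp).1, Finset.mem_univ _⟩
    have hprodsum : ∑ x ∈ μ1 ×ˢ (Finset.univ : Finset Bool), g x = WSet U V μ1 := by
      rw [Finset.sum_product]
      unfold WSet
      refine Finset.sum_congr rfl fun q _ => ?_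
      rw [Fintype.sum_bool]
      simp [hgdef]
    have hsum2 : ∑ p ∈ S, g (F p) ≤ WSet U V μ1 := by
      rw [← Finset.sum_image hinj, ← hprodsum]
      exact Finset.sum_le_sum_of_subset_of_nonneg hsub fun x _ _ => hgnn x
    have hcard : S.card ≤ μ1.card * 2 := by
      calc S.card = (S.image F).card := (Finset.card_image_of_injOn hinj).symm
        _ ≤ (μ1 ×ˢ (Finset.univ : Finset Bool)).card := Finset.card_le_card hsub
        _ = μ1.card * 2 := by rw [Finset.card_product, Finset.card_univ, Fintype.card_bool]
    have hW1lb : 2 * (μ1.card : ℝ) * σmin ≤ WSet U V μ1 := by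
      have : ∀ q ∈ μ1, 2 * σmin ≤ U q.1 q.2 + V q.1 q.2 := by
        intro q hq
        have h1 := (hUb q.1 q.2 (hheavy q hq).1.ne').1
        have h2 := (hVb q.1 q.2 (hheavy q hq).2.ne').1
        linarith
      have h := Finset.card_nsmul_le_sum μ1 (fun q => U q.1 q.2 + V q.1 q.2) (2 * σmin) this
      rw [nsmul_eq_mul] at h
      unfold WSet
      linarith
    have hSbound : WSet U V S ≤ (1 + ρ) * WSet U V μ1 := by
      have h1 : WSet U V S ≤ (∑ p ∈ S, g (F p)) + S.card * σmax := by
        unfold WSet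
        calc ∑ p ∈ S, (U p.1 p.2 + V p.1 p.2) ≤ ∑ p ∈ S, (g (F p) + σmax) :=
              Finset.sum_le_sum fun p hp => (hF p hp).2.2
          _ = (∑ p ∈ S, g (F p)) + S.card * σmax := by
              rw [Finset.sum_add_distrib, Finset.sum_const, nsmul_eq_mul]
      have h2 : (S.card : ℝ) * σmax ≤ ρ * WSet U V μ1 := by
        have hc : (S.card : ℝ) ≤ 2 * μ1.card := by
          have := hcard
          push_cast
          calc (S.card : ℝ) ≤ (μ1.card * 2 : ℕ) := by exact_mod_cast hcard
            _ = 2 * μ1.card := by push_cast; ring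
        calc (S.card : ℝ) * σmax ≤ (2 * μ1.card) * σmax :=
              mul_le_mul_of_nonneg_right hc hσmax.le
          _ = ρ * (2 * (μ1.card : ℝ) * σmin) := by rw [← hρσ]; ring
          _ ≤ ρ * WSet U V μ1 := mul_le_mul_of_nonneg_left hW1lb hρ.le
      have hW1nn : 0 ≤ WSet U V μ1 := Finset.sum_nonneg fun q _ =>
        add_nonneg (hU q.1 q.2) (hV q.1 q.2)
      have h3 := hsum2
      calc WSet U V S ≤ (∑ p ∈ S, g (F p)) + S.card * σmax := h1
        _ ≤ WSet U V μ1 + ρ * WSet U V μ1 := add_le_add h3 h2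
        _ = (1 + ρ) * WSet U V μ1 := by ring
    have hW2nn : 0 ≤ WSet U V μ2 := Finset.sum_nonneg fun q _ =>
      add_nonneg (hU q.1 q.2) (hV q.1 q.2)
    have hmain : WSet U V μopt ≤ (1 + ρ) * WSet U V (μ1 ∪ μ2) := by
      rw [hWunion, hsplit]
      have : WSet U V μ2 ≤ (1 + ρ) * WSet U V μ2 := by nlinarith
      nlinarith
    have h1ρ : (0 : ℝ) < 1 + ρ := by linarith
    calc (1 + ρ)⁻¹ * WSet U V μopt ≤ (1 + ρ)⁻¹ * ((1 + ρ) * WSet U V (μ1 ∪ μ2)) :=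
          mul_le_mul_of_nonneg_left hmain (inv_nonneg.2 h1ρ.le)
      _ = WSet U V (μ1 ∪ μ2) := by
          rw [← mul_assoc, inv_mul_cancel₀ h1ρ.ne', one_mul]
end

section
/- For the modified two-phase algorithm on SMC instances with ternary valuations in {0,1,α} (α > 1): if μ1 is an integral matching of heavy pairs such that every heavy pair (m,w) not in μ1 has a pair in μ1 sharing an agent with (m,w) and with combined value U+V at least U(m,w)+V(m,w), and μopt_1 is the set of pairs of an arbitrary integral matching μopt sharing an agent with μ1, then W(μ1 \ μopt_1) ≥ min{1/2, 1/α} · W(μopt_1 \ μ1). -/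
open Finset

theorem stmt17 {n : ℕ} (U V : Fin n → Fin n → ℝ) (α : ℝ) (hα : 1 < α)
    (hUter : ∀ m w, U m w = 0 ∨ U m w = 1 ∨ U m w = α)
    (hVter : ∀ m w, V m w = 0 ∨ V m w = 1 ∨ V m w = α)
    (μ1 : Finset (Fin n × Fin n)) (hμ1 : IsMatchingSet μ1)
    (hheavy : ∀ p ∈ μ1, 0 < U p.1 p.2 ∧ 0 < V p.1 p.2)
    (hstab : ∀ m w, 0 < U m w → 0 < V m w → (m, w) ∉ μ1 →
        ∃ q ∈ μ1, (q.1 = m ∨ q.2 = w) ∧ U m w + V m w ≤ U q.1 q.2 + V q.1 q.2)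
    (μopt : Finset (Fin n × Fin n)) (hμopt : IsMatchingSet μopt)
    (μopt1 : Finset (Fin n × Fin n))
    (hdef : ∀ p, p ∈ μopt1 ↔ p ∈ μopt ∧ ∃ q ∈ μ1, p.1 = q.1 ∨ p.2 = q.2) :
    min (1/2) (1/α) * WSet U V (μopt1 \ μ1) ≤ WSet U V (μ1 \ μopt1) := by
  classical
  set c := min (1/2 : ℝ) (1/α) with hc
  have hα0 : (0:ℝ) < α := lt_trans one_pos hα
  have hc0 : 0 ≤ c := le_min (by norm_num) (by positivity)
  have hc2 : c ≤ 1/2 := min_le_left _ _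
  have hcα : c ≤ 1/α := min_le_right _ _
  have hUnn : ∀ m w, 0 ≤ U m w := by
    intro m w; rcases hUter m w with h|h|h <;> rw [h] <;> linarith
  have hVnn : ∀ m w, 0 ≤ V m w := by
    intro m w; rcases hVter m w with h|h|h <;> rw [h] <;> linarith
  have hUle : ∀ m w, U m w ≤ α := by
    intro m w; rcases hUter m w with h|h|h <;> rw [h] <;> linarith
  have hVle : ∀ m w, V m w ≤ α := by
    intro m w; rcases hVter m w with h|h|h <;> rw [h] <;> linarith
  set A := μopt1 \ μ1 with hA
  set B := μ1 \ μopt1 with hB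
  have hAopt : ∀ p ∈ A, p ∈ μopt := by
    intro p hp
    exact ((hdef p).mp (Finset.mem_sdiff.mp hp).1).1
  have key : ∀ p, p ∈ A → ∃ q, q ∈ B ∧ (p.1 = q.1 ∨ p.2 = q.2) ∧
      c * (U p.1 p.2 + V p.1 p.2) ≤ (U q.1 q.2 + V q.1 q.2) / 2 := by
    intro p hp
    rcases Finset.mem_sdiff.mp hp with ⟨hp1, hp2⟩
    obtain ⟨hpopt, q0, hq0, hshare0⟩ := (hdef p).mp hp1
    have hBmem : ∀ q ∈ μ1, (p.1 = q.1 ∨ p.2 = q.2) → q ∈ B := by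
      intro q hq hshare
      refine Finset.mem_sdiff.mpr ⟨hq, fun hqopt1 => ?_⟩
      have hqopt : q ∈ μopt := ((hdef q).mp hqopt1).1
      have hne : p ≠ q := fun h => hp2 (h ▸ hq)
      have hd := hμopt p hpopt q hqopt hne
      rcases hshare with h|h
      · exact hd.1 h
      · exact hd.2 h
    have hpnn : 0 ≤ U p.1 p.2 + V p.1 p.2 := by
      linarith [hUnn p.1 p.2, hVnn p.1 p.2]
    by_cases hhp : 0 < U p.1 p.2 ∧ 0 < V p.1 p.2
    · have hp2' : (p.1, p.2) ∉ μ1 := by simpa using hp2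
      obtain ⟨q, hq, hshare, hval⟩ := hstab p.1 p.2 hhp.1 hhp.2 hp2'
      have hshare' : p.1 = q.1 ∨ p.2 = q.2 := by
        rcases hshare with h|h
        · exact Or.inl h.symm
        · exact Or.inr h.symm
      refine ⟨q, hBmem q hq hshare', hshare', ?_⟩
      have : c * (U p.1 p.2 + V p.1 p.2) ≤ (1/2) * (U p.1 p.2 + V p.1 p.2) :=
        mul_le_mul_of_nonneg_right hc2 hpnn
      linarith
    · refine ⟨q0, hBmem q0 hq0 hshare0, hshare0, ?_⟩
      have hqh := hheavy q0 hq0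
      have h1 : 1 ≤ U q0.1 q0.2 := by
        rcases hUter q0.1 q0.2 with h|h|h
        · have := hqh.1; rw [h] at this; linarith
        · rw [h]
        · rw [h]; linarith
      have h2 : 1 ≤ V q0.1 q0.2 := by
        rcases hVter q0.1 q0.2 with h|h|h
        · have := hqh.2; rw [h] at this; linarith
        · rw [h]
        · rw [h]; linarith
      have hlight : U p.1 p.2 + V p.1 p.2 ≤ α := by
        rcases not_and_or.mp hhp with h|h
        · have : U p.1 p.2 = 0 := le_antisymm (not_lt.mp h) (hUnn p.1 p.2)
          rw [this]; linarith [hVle p.1 p.2]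
        · have : V p.1 p.2 = 0 := le_antisymm (not_lt.mp h) (hVnn p.1 p.2)
          rw [this]; linarith [hUle p.1 p.2]
      have hcval : c * (U p.1 p.2 + V p.1 p.2) ≤ c * α :=
        mul_le_mul_of_nonneg_left hlight hc0
      have hcα1 : c * α ≤ (1/α) * α := mul_le_mul_of_nonneg_right hcα hα0.le
      have : (1/α) * α = 1 := by field_simp
      linarith
  choose! f hfB hfshare hfval using key
  have hsum := Finset.sum_fiberwise_of_maps_to hfB
    (fun p => c * (U p.1 p.2 + V p.1 p.2))
  have inner : ∀ q ∈ B, (∑ p ∈ A with f p = q, c * (U p.1 p.2 + V p.1 p.2)) ≤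
      U q.1 q.2 + V q.1 q.2 := by
    intro q hq
    have hvq : 0 ≤ (U q.1 q.2 + V q.1 q.2) / 2 := by
      linarith [hUnn q.1 q.2, hVnn q.1 q.2]
    have hcard : (A.filter (fun p => f p = q)).card ≤ 2 := by
      have hsub : A.filter (fun p => f p = q) ⊆
          (A.filter (fun p => p.1 = q.1)) ∪ (A.filter (fun p => p.2 = q.2)) := by
        intro p hp
        rcases Finset.mem_filter.mp hp with ⟨hpA, hfq⟩
        have hsh := hfshare p hpA
        rw [hfq] at hsh
        rcases hsh with h|h
        · exact Finset.mem_union_left _ (Finset.mem_filter.mpr ⟨hpA, h⟩)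
        · exact Finset.mem_union_right _ (Finset.mem_filter.mpr ⟨hpA, h⟩)
      have h1 : (A.filter (fun p => p.1 = q.1)).card ≤ 1 := by
        refine Finset.card_le_one.mpr ?_
        intro a ha b hb
        rcases Finset.mem_filter.mp ha with ⟨haA, ha1⟩
        rcases Finset.mem_filter.mp hb with ⟨hbA, hb1⟩
        by_contra hne
        exact (hμopt a (hAopt a haA) b (hAopt b hbA) hne).1 (ha1.trans hb1.symm)
      have h2 : (A.filter (fun p => p.2 = q.2)).card ≤ 1 := by
        refine Finset.card_le_one.mpr ?_
        intro a ha b hb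
        rcases Finset.mem_filter.mp ha with ⟨haA, ha1⟩
        rcases Finset.mem_filter.mp hb with ⟨hbA, hb1⟩
        by_contra hne
        exact (hμopt a (hAopt a haA) b (hAopt b hbA) hne).2 (ha1.trans hb1.symm)
      calc (A.filter (fun p => f p = q)).card
          ≤ ((A.filter (fun p => p.1 = q.1)) ∪ (A.filter (fun p => p.2 = q.2))).card :=
            Finset.card_le_card hsub
        _ ≤ _ := Finset.card_union_le _ _
        _ ≤ 2 := by omega
    calc (∑ p ∈ A with f p = q, c * (U p.1 p.2 + V p.1 p.2))
        ≤ (A.filter (fun p => f p = q)).card • ((U q.1 q.2 + V q.1 q.2) / 2) := by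
          refine Finset.sum_le_card_nsmul _ _ _ ?_
          intro p hp
          rcases Finset.mem_filter.mp hp with ⟨hpA, hfq⟩
          have := hfval p hpA
          rw [hfq] at this
          exact this
      _ ≤ U q.1 q.2 + V q.1 q.2 := by
          rw [nsmul_eq_mul]
          have hle : ((A.filter (fun p => f p = q)).card : ℝ) ≤ 2 := by
            exact_mod_cast hcard
          nlinarith
  rw [WSet, WSet, Finset.mul_sum]
  calc (∑ p ∈ A, c * (U p.1 p.2 + V p.1 p.2))
      = ∑ q ∈ B, ∑ p ∈ A with f p = q, c * (U p.1 p.2 + V p.1 p.2) := hsum.symm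
    _ ≤ ∑ q ∈ B, (U q.1 q.2 + V q.1 q.2) := Finset.sum_le_sum inner
end

section
/- In the family of SMC instances I_n from the support lower bound construction (n odd, α > max{n+2, 2n/(ρ(n−1))}, with U(m_i,w_i)=V(m_i,w_i)=1 for all i, U(m_{2i},w_1)=U(m_{2i+1},w_{2i})=V(m_{2i},w_{2i+1})=α and the reverse-direction values 0 for i=1,…,(n−1)/2, V(m_n,w_1)=α and U(m_n,w_1)=0, all else zero), any stable fractional matching μ' with μ'(m_n,w_1)=0 must satisfy μ'(m_i,w_i)=1 for all i = 1,…,n, and hence W(μ') = 2n. -/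
open Finset

/-- Valuations of the men in the instance `I_n` (0-indexed: man `m_{i+1}` is index `i`):
`U(m_i,w_i)=1`, `U(m_{2t},w_1)=α`, `U(m_{2t+1},w_{2t})=α`, all else `0`. -/
def U18 (n : ℕ) (α : ℝ) (i j : Fin n) : ℝ :=
  if i = j then 1
  else if i.val % 2 = 1 ∧ j.val = 0 then α
  else if i.val % 2 = 0 ∧ j.val + 1 = i.val then α
  else 0

/-- Valuations of the women in the instance `I_n`:
`V(m_i,w_i)=1`, `V(m_{2t},w_{2t+1})=α`, `V(m_n,w_1)=α`, all else `0`. -/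
def V18 (n : ℕ) (α : ℝ) (i j : Fin n) : ℝ :=
  if i = j then 1
  else if i.val % 2 = 1 ∧ j.val = i.val + 1 then α
  else if i.val = n - 1 ∧ j.val = 0 then α
  else 0

lemma diag_one_zero {n : ℕ} {μ : Fin n → Fin n → ℝ} (hfr : IsFrac μ) {i : Fin n}
    (h : μ i i = 1) {j : Fin n} (hj : j ≠ i) : μ i j = 0 ∧ μ j i = 0 := by
  obtain ⟨hnn, hrow, hcol⟩ := hfr
  constructor
  · have hr := hrow i
    have hsplit : ∑ w, μ i w = μ i i + ∑ w ∈ Finset.univ.erase i, μ i w :=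
      (Finset.add_sum_erase _ _ (Finset.mem_univ i)).symm
    have h1 : ∑ w ∈ Finset.univ.erase i, μ i w ≤ 0 := by linarith
    have h2 : ∑ w ∈ Finset.univ.erase i, μ i w = 0 :=
      le_antisymm h1 (Finset.sum_nonneg fun x _ => hnn i x)
    have := (Finset.sum_eq_zero_iff_of_nonneg (fun x _ => hnn i x)).mp h2
    exact this j (Finset.mem_erase.mpr ⟨hj, Finset.mem_univ j⟩)
  · have hr := hcol i
    have hsplit : ∑ m, μ m i = μ i i + ∑ m ∈ Finset.univ.erase i, μ m i :=
      (Finset.add_sum_erase _ _ (Finset.mem_univ i)).symm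
    have h1 : ∑ m ∈ Finset.univ.erase i, μ m i ≤ 0 := by linarith
    have h2 : ∑ m ∈ Finset.univ.erase i, μ m i = 0 :=
      le_antisymm h1 (Finset.sum_nonneg fun x _ => hnn x i)
    have := (Finset.sum_eq_zero_iff_of_nonneg (fun x _ => hnn x i)).mp h2
    exact this j (Finset.mem_erase.mpr ⟨hj, Finset.mem_univ j⟩)

lemma diag_le_one {n : ℕ} {μ : Fin n → Fin n → ℝ} (hfr : IsFrac μ) (i : Fin n) :
    μ i i ≤ 1 := by
  obtain ⟨hnn, hrow, _⟩ := hfr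
  exact le_trans (Finset.single_le_sum (fun w _ => hnn i w) (Finset.mem_univ i)) (hrow i)

theorem stmt18 (n : ℕ) (hodd : Odd n) (hpos : 0 < n) (α ρ : ℝ)
    (hρ0 : 0 < ρ) (hρ1 : ρ ≤ 1)
    (hα1 : (n : ℝ) + 2 < α) (hα2 : 2 * (n : ℝ) / (ρ * ((n : ℝ) - 1)) < α)
    (μ' : Fin n → Fin n → ℝ) (hfr : IsFrac μ')
    (hst : IsStable (U18 n α) (V18 n α) μ')
    (h0 : μ' ⟨n - 1, Nat.sub_lt hpos Nat.one_pos⟩ ⟨0, hpos⟩ = 0) :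
    (∀ i : Fin n, μ' i i = 1) ∧ welfare (U18 n α) (V18 n α) μ' = 2 * n := by
  have key : ∀ i : Fin n, μ' i i = 1 := by
    have H : ∀ k : ℕ, ∀ i : Fin n, i.val = k → μ' i i = 1 := by
      intro k
      induction k using Nat.strong_induction_on with
      | _ k IH =>
        intro i hik
        have diag : ∀ j : Fin n, j.val < i.val → μ' j j = 1 := fun j hj =>
          IH j.val (hik ▸ hj) j rfl
        have hui : uM (U18 n α) μ' i = μ' i i := by
          unfold uM
          rw [Finset.sum_eq_single i]
          · simp [U18]
          · intro w _ hw
            have hz : U18 n α i w * μ' i w = 0 := by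
              unfold U18
              split_ifs with h1 h2 h3
              · exact absurd h1.symm hw
              · have hi0 : 0 < i.val := by
                  rcases Nat.eq_zero_or_pos i.val with h | h
                  · omega
                  · exact h
                have hw0 : w = (⟨0, hpos⟩ : Fin n) := Fin.ext h2.2
                have hd : μ' (⟨0, hpos⟩ : Fin n) (⟨0, hpos⟩ : Fin n) = 1 :=
                  diag _ hi0
                have hne : i ≠ (⟨0, hpos⟩ : Fin n) := by
                  intro h; apply hw; rw [hw0, ← h]
                have := (diag_one_zero hfr hd hne).2
                rw [hw0, this, mul_zero]
              · have hwlt : w.val < i.val := by omega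
                have hd : μ' w w = 1 := diag w hwlt
                have hne : i ≠ w := fun h => hw h.symm
                have := (diag_one_zero hfr hd hne).2
                rw [this, mul_zero]
              · rw [zero_mul]
            exact hz
          · intro h; exact absurd (Finset.mem_univ i) h
        have hvi : vW (V18 n α) μ' i = μ' i i := by
          unfold vW
          rw [Finset.sum_eq_single i]
          · simp [V18]
          · intro m _ hm
            have hz : V18 n α m i * μ' m i = 0 := by
              unfold V18
              split_ifs with h1 h2 h3
              · exact absurd h1 hm
              · have hmlt : m.val < i.val := by omega
                have hd : μ' m m = 1 := diag m hmlt
                have hne : i ≠ m := fun h => hm h.symm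
                have := (diag_one_zero hfr hd hne).1
                rw [this, mul_zero]
              · have hmeq : m = (⟨n - 1, Nat.sub_lt hpos Nat.one_pos⟩ : Fin n) :=
                  Fin.ext h3.1
                have hieq : i = (⟨0, hpos⟩ : Fin n) := Fin.ext h3.2
                rw [hmeq, hieq, h0, mul_zero]
              · rw [zero_mul]
            exact hz
          · intro h; exact absurd (Finset.mem_univ i) h
        have hle : μ' i i ≤ 1 := diag_le_one hfr i
        have hge : 1 ≤ μ' i i := by
          rcases hst i i with h | h
          · rw [hui] at h; simpa [U18] using h
          · rw [hvi] at h; simpa [V18] using h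
        linarith
    intro i; exact H i.val i rfl
  refine ⟨key, ?_⟩
  have hu : ∀ m : Fin n, uM (U18 n α) μ' m = 1 := by
    intro m
    unfold uM
    rw [Finset.sum_eq_single m]
    · simp [U18, key m]
    · intro w _ hw
      have := (diag_one_zero hfr (key m) (fun h => hw (h ▸ rfl) : w ≠ m)).1
      rw [this, mul_zero]
    · intro h; exact absurd (Finset.mem_univ m) h
  have hv : ∀ w : Fin n, vW (V18 n α) μ' w = 1 := by
    intro w
    unfold vW
    rw [Finset.sum_eq_single w]
    · simp [V18, key w]
    · intro m _ hm
      have := (diag_one_zero hfr (key w) (fun h => hm (h ▸ rfl) : m ≠ w)).2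
      rw [this, mul_zero]
    · intro h; exact absurd (Finset.mem_univ w) h
  unfold welfare
  simp [hu, hv]
  ring
end
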